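/- arXiv:2411.09832 — 3 statements merged into one kernel-verified Lean document; each statement's English description precedes it below -/
import Mathlib

section
/- Let 𝕀 be an interval hypergraph on [n] that is closed under intersection. Then for any two acyclic orientations A and B of 𝕀, the following are equivalent: (a) A ≤ B in the hypergraphic poset P_𝕀; (b) A(I) ≤ B(I) for all I ∈ 𝕀; (c) for all 1 ≤ i < j ≤ n, if j ≺_A i then ¬(i ≺_B j). -/
namespace IHL

/-- The hyperedges of a hypergraph, as a subtype. -/
abbrev Edge (𝕀 : Finset (Finset ℕ)) : Type := {H : Finset ℕ // H ∈ 𝕀}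

/-- `ℋ` is a hypergraph on `[n] = {1,…,n}`: hyperedges are nonempty subsets of `[n]`
and all singletons belong to `ℋ`. -/
def IsHypergraph (n : ℕ) (ℋ : Finset (Finset ℕ)) : Prop :=
  (∀ H ∈ ℋ, H.Nonempty ∧ H ⊆ Finset.Icc 1 n) ∧
    ∀ i, 1 ≤ i → i ≤ n → ({i} : Finset ℕ) ∈ ℋ

/-- `𝕀` is an interval hypergraph on `[n]`: hyperedges are intervals `[a,b] ⊆ [n]`
and all singletons belong to `𝕀`. -/
def IsIntervalHypergraph (n : ℕ) (𝕀 : Finset (Finset ℕ)) : Prop :=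
  (∀ H ∈ 𝕀, ∃ a b, 1 ≤ a ∧ a ≤ b ∧ b ≤ n ∧ H = Finset.Icc a b) ∧
    ∀ i, 1 ≤ i → i ≤ n → ({i} : Finset ℕ) ∈ 𝕀

/-- An orientation assigns to each hyperedge one of its elements. -/
def IsOrientation (𝕀 : Finset (Finset ℕ)) (O : Edge 𝕀 → ℕ) : Prop :=
  ∀ H : Edge 𝕀, O H ∈ H.1

/-- Acyclicity: there is no cyclic sequence `H_0, …, H_k` with `k ≥ 2`, `H_k = H_0`, and
`O (H (p+1)) ∈ H p \ {O (H p)}` for all `p < k`. -/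
def IsAcyclic (𝕀 : Finset (Finset ℕ)) (O : Edge 𝕀 → ℕ) : Prop :=
  ¬∃ (k : ℕ) (H : ℕ → Edge 𝕀), 2 ≤ k ∧ H k = H 0 ∧
    ∀ p < k, O (H (p + 1)) ∈ (H p).1 ∧ O (H (p + 1)) ≠ O (H p)

/-- An acyclic orientation, i.e. an element of the hypergraphic poset. -/
def AcycOr (𝕀 : Finset (Finset ℕ)) (O : Edge 𝕀 → ℕ) : Prop :=
  IsOrientation 𝕀 O ∧ IsAcyclic 𝕀 O

/-- Increasing flip from `O` to `O'` flipping `i` to `j`. -/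
def IsIncFlip (n : ℕ) (𝕀 : Finset (Finset ℕ)) (i j : ℕ) (O O' : Edge 𝕀 → ℕ) : Prop :=
  O ≠ O' ∧ 1 ≤ i ∧ i < j ∧ j ≤ n ∧
    ∀ H : Edge 𝕀,
      (O H ≠ O' H → O H = i ∧ O' H = j) ∧
      (i ∈ H.1 → j ∈ H.1 → (O H = i ↔ O' H = j))

/-- One increasing flip step between acyclic orientations. -/
def FlipStep (n : ℕ) (𝕀 : Finset (Finset ℕ)) (O O' : Edge 𝕀 → ℕ) : Prop :=
  AcycOr 𝕀 O ∧ AcycOr 𝕀 O' ∧ ∃ i j, IsIncFlip n 𝕀 i j O O'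

/-- The order of the hypergraphic poset `P_𝕀`: reflexive-transitive closure of
the increasing flip relation on acyclic orientations. -/
def leP (n : ℕ) (𝕀 : Finset (Finset ℕ)) : (Edge 𝕀 → ℕ) → (Edge 𝕀 → ℕ) → Prop :=
  Relation.ReflTransGen (FlipStep n 𝕀)

/-- Strict order of the hypergraphic poset. -/
def ltP (n : ℕ) (𝕀 : Finset (Finset ℕ)) (A B : Edge 𝕀 → ℕ) : Prop :=
  leP n 𝕀 A B ∧ A ≠ B

/-- `B` covers `A` in `P_𝕀`. -/
def CoversP (n : ℕ) (𝕀 : Finset (Finset ℕ)) (A B : Edge 𝕀 → ℕ) : Prop :=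
  ltP n 𝕀 A B ∧ ¬∃ C, AcycOr 𝕀 C ∧ ltP n 𝕀 A C ∧ ltP n 𝕀 C B

/-- `𝕀` is closed under intersection. -/
def ClosedUnderIntersection (𝕀 : Finset (Finset ℕ)) : Prop :=
  ∀ I ∈ 𝕀, ∀ J ∈ 𝕀, (I ∩ J).Nonempty → I ∩ J ∈ 𝕀

/-- `π` is a permutation of `[n]` (it fixes everything outside `[1,n]`). -/
def IsPermOn (n : ℕ) (π : Equiv.Perm ℕ) : Prop :=
  ∀ x, x ∉ Finset.Icc 1 n → π x = x

/-- The surjection `Or` from permutations to acyclic orientations: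
`Or_π (H) = π (min {p : π p ∈ H})`. -/
noncomputable def orMap (𝕀 : Finset (Finset ℕ)) (π : Equiv.Perm ℕ) : Edge 𝕀 → ℕ :=
  fun H => π (sInf {p | π p ∈ H.1})

/-- The weak order on permutations of `[n]`, via inclusion of inversion sets. -/
def weakLe (n : ℕ) (σ τ : Equiv.Perm ℕ) : Prop :=
  ∀ a b, 1 ≤ a → a < b → b ≤ n → σ.symm b < σ.symm a → τ.symm b < τ.symm a

/-- `π` contains the pattern 231. -/
def Contains231 (n : ℕ) (π : Equiv.Perm ℕ) : Prop :=
  ∃ p q r, 1 ≤ p ∧ p < q ∧ q < r ∧ r ≤ n ∧ π r < π p ∧ π p < π q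

/-- `π` contains the pattern 213. -/
def Contains213 (n : ℕ) (π : Equiv.Perm ℕ) : Prop :=
  ∃ p q r, 1 ≤ p ∧ p < q ∧ q < r ∧ r ≤ n ∧ π q < π p ∧ π p < π r

/-- The partial order `≺_A`: transitive closure of `A H ≺ h` for `h ∈ H \ {A H}`. -/
def prec (𝕀 : Finset (Finset ℕ)) (A : Edge 𝕀 → ℕ) : ℕ → ℕ → Prop :=
  Relation.TransGen fun a b => ∃ H : Edge 𝕀, A H = a ∧ b ∈ H.1 ∧ b ≠ a

/-- The distributivity condition on interval hypergraphs: for all `I, J ∈ 𝕀` with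
`I ⊈ J`, `J ⊈ I` and `I ∩ J ≠ ∅`, the intersection `I ∩ J` is in `𝕀` and is initial
or final in any `K ∈ 𝕀` containing it. -/
def IsDistribHG (𝕀 : Finset (Finset ℕ)) : Prop :=
  ∀ I ∈ 𝕀, ∀ J ∈ 𝕀, ¬I ⊆ J → ¬J ⊆ I → (I ∩ J).Nonempty →
    (I ∩ J ∈ 𝕀 ∧ ∀ K ∈ 𝕀, I ∩ J ⊆ K → ((I ∩ J).min = K.min ∨ (I ∩ J).max = K.max))

/-- `j ∈ 𝒥_𝕀 = ⋃_{I ∈ 𝕀} (I \ {min I})`. -/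
def InJI (𝕀 : Finset (Finset ℕ)) (j : ℕ) : Prop :=
  ∃ I ∈ 𝕀, j ∈ I ∧ ∃ y ∈ I, y < j

/-- `Jj` is the interval `J_j = ⋂ {I ∈ 𝕀 : j ∈ I \ {min I}}`. -/
def IsJj (𝕀 : Finset (Finset ℕ)) (j : ℕ) (Jj : Finset ℕ) : Prop :=
  ∀ x, x ∈ Jj ↔ ∀ I ∈ 𝕀, j ∈ I → (∃ y ∈ I, y < j) → x ∈ I

/-- `Aj` is the orientation `A_j` (where `μj = min J_j`):
`A_j (J) = j` if `j ∈ J` and `min J = μ_j`, and `A_j (J) = min J` otherwise. -/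
def IsAj (𝕀 : Finset (Finset ℕ)) (j μj : ℕ) (Aj : Edge 𝕀 → ℕ) : Prop :=
  ∀ J : Edge 𝕀,
    (j ∈ J.1 ∧ IsLeast (J.1 : Set ℕ) μj → Aj J = j) ∧
    (¬(j ∈ J.1 ∧ IsLeast (J.1 : Set ℕ) μj) → IsLeast (J.1 : Set ℕ) (Aj J))

/-- `Jij` is the interval `J_{ij} = ⋂ {I ∈ 𝕀 : {i,j} ⊆ I}`. -/
def IsJij (𝕀 : Finset (Finset ℕ)) (i j : ℕ) (Jij : Finset ℕ) : Prop :=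
  ∀ x, x ∈ Jij ↔ ∀ I ∈ 𝕀, i ∈ I → j ∈ I → x ∈ I

/-- `(i,j) ∈ ℐ𝒥_𝕀`, where `μij = min J_{ij}`: both lie in a common hyperedge and
`i = max ([μ_{ij}, j) \ ⋃ {J \ {min J} : J ∈ 𝕀, J ⊆ [μ_{ij}, j)})`. -/
def InIJ (n : ℕ) (𝕀 : Finset (Finset ℕ)) (i j μij : ℕ) : Prop :=
  1 ≤ i ∧ i < j ∧ j ≤ n ∧ (∃ I ∈ 𝕀, i ∈ I ∧ j ∈ I) ∧
    IsGreatest {m | μij ≤ m ∧ m < j ∧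
      ∀ J ∈ 𝕀, (∀ x ∈ J, μij ≤ x ∧ x < j) → m ∈ J → ∀ y ∈ J, m ≤ y} i

/-- `Aij` is the orientation `A_{ij}` (where `μij = min J_{ij}`):
`A_{ij} (J) = j` if `j ∈ J` and `min J ≥ μ_{ij}`, and `A_{ij} (J) = min J` otherwise. -/
def IsAij (𝕀 : Finset (Finset ℕ)) (j μij : ℕ) (Aij : Edge 𝕀 → ℕ) : Prop :=
  ∀ J : Edge 𝕀,
    (j ∈ J.1 ∧ (∀ x ∈ J.1, μij ≤ x) → Aij J = j) ∧
    (¬(j ∈ J.1 ∧ (∀ x ∈ J.1, μij ≤ x)) → IsLeast (J.1 : Set ℕ) (Aij J))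

/-- The reversal `x ↦ n - x + 1` on `[n]`. -/
def revPt (n x : ℕ) : ℕ := n - x + 1

/-- The reversed hypergraph `ℋ↔`. -/
def revHG (n : ℕ) (ℋ : Finset (Finset ℕ)) : Finset (Finset ℕ) :=
  ℋ.image fun H => H.image (revPt n)

/-!
Increasing flips only increase the values of an orientation, which gives (a) ⇒ (b). For
(b) ⇒ (a), flip `A` from `A W` to `B W` on a hyperedge `W` of disagreement with `(A W, B W)`
lexicographically maximal: by intersection-closedness the result is again acyclic and lies
between `A` and `B`, so induction on `∑ H, (B H - A H)` produces a chain of flips. If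
`B I < A I`, then `A I ≺_A B I` and `B I ≺_B A I`, against (c). Conversely, a pair `i < j`
violating (c) with `j - i` minimal is jumped over by one step of each chain, and the
intersection of the two hyperedges of these steps would have to be oriented towards `j` by `A`
and towards `i` by `B`.
-/

end IHL

section Relations

open Relation

variable {α : Type*} {r s : α → α → Prop}

theorem Relation.TransGen.exists_seq {a b : α} (h : TransGen r a b) :
    ∃ m, 0 < m ∧ ∃ f : ℕ → α, f 0 = a ∧ f m = b ∧ ∀ p < m, r (f p) (f (p + 1)) := by
  induction h with
  | @single b hab =>
    refine ⟨1, one_pos, fun p => if p = 0 then a else b, rfl, rfl, fun p hp => ?_⟩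
    obtain rfl : p = 0 := by omega
    exact hab
  | @tail b c _ hbc ih =>
    obtain ⟨m, hm, f, hf0, hfm, hf⟩ := ih
    refine ⟨m + 1, m.succ_pos, Function.update f (m + 1) c, ?_, Function.update_self .., ?_⟩
    · rw [Function.update_of_ne (by omega), hf0]
    · intro p hp
      rw [Function.update_of_ne (by omega : p ≠ m + 1)]
      rcases (by omega : p < m ∨ p = m) with hp | rfl
      · rw [Function.update_of_ne (by omega)]
        exact hf p hp
      · rw [Function.update_self, hfm]
        exact hbc

theorem Relation.transGen_of_seq {f : ℕ → α} {m : ℕ} (hm : 0 < m)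
    (hf : ∀ p < m, r (f p) (f (p + 1))) : TransGen r (f 0) (f m) := by
  induction m with
  | zero => omega
  | succ m ih =>
    rcases Nat.eq_zero_or_pos m with rfl | hm'
    · exact .single (hf 0 one_pos)
    · exact (ih hm' fun p hp => hf p (by omega)).tail (hf m (by omega))

theorem Relation.TransGen.exists_cross [LinearOrder α] {a b t : α} (h : TransGen r a b)
    (hat : a ≤ t) (htb : t < b) :
    ∃ x y, ReflTransGen r a x ∧ r x y ∧ ReflTransGen r y b ∧ x ≤ t ∧ t < y := by
  induction h using Relation.TransGen.head_induction_on with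
  | single hab => exact ⟨_, _, .refl, hab, .refl, hat, htb⟩
  | @head a c hac hcb ih =>
    by_cases htc : t < c
    · exact ⟨a, c, .refl, hac, hcb.to_reflTransGen, hat, htc⟩
    · obtain ⟨x, y, hcx, hxy, hyb, hxt, hty⟩ := ih (le_of_not_gt htc)
      exact ⟨x, y, .head hac hcx, hxy, hyb, hxt, hty⟩

theorem Relation.TransGen.exists_cross_down [LinearOrder α] {a b t : α} (h : TransGen r a b)
    (hta : t ≤ a) (hbt : b < t) :
    ∃ x y, ReflTransGen r a x ∧ r x y ∧ ReflTransGen r y b ∧ t ≤ x ∧ y < t :=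
  h.exists_cross (α := αᵒᵈ) hta hbt

/-- An `r`-cycle that is not an `s`-cycle passes through `j` and from there stays in `Q`. -/
theorem Relation.not_transGen_self_of_exit {Q : α → Prop} {j : α}
    (hs : ∀ a, ¬TransGen s a a) (hrs : ∀ a b, r a b → s a b ∨ (a = j ∧ Q b))
    (hQ : ∀ a b, Q a → r a b → Q b) (hj : ¬Q j) (a : α) : ¬TransGen r a a := by
  have hQ' : ∀ {b c}, ReflTransGen r b c → Q b → Q c := by
    intro b c h hb
    induction h with
    | refl => exact hb
    | tail _ hcd ih => exact hQ _ _ ih hcd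
  have key : ∀ {b c}, TransGen r b c → TransGen s b c ∨ (ReflTransGen r b j ∧ Q c) := by
    intro b c h
    induction h with
    | single hbc =>
      rcases hrs _ _ hbc with h | ⟨rfl, hc⟩
      · exact .inl (.single h)
      · exact .inr ⟨.refl, hc⟩
    | tail hbc hcd ih =>
      rcases ih with h | ⟨hbj, hc⟩
      · rcases hrs _ _ hcd with h' | ⟨rfl, hd⟩
        · exact .inl (h.tail h')
        · exact .inr ⟨hbc.to_reflTransGen, hd⟩
      · exact .inr ⟨hbj, hQ _ _ hc hcd⟩
  intro ha
  rcases key ha with h | ⟨haj, hQa⟩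
  · exact hs a h
  · exact hj (hQ' haj hQa)

end Relations

namespace IHL

open Relation Finset

variable {n : ℕ} {𝕀 : Finset (Finset ℕ)} {O : Edge 𝕀 → ℕ}

def step (𝕀 : Finset (Finset ℕ)) (O : Edge 𝕀 → ℕ) (a b : ℕ) : Prop :=
  ∃ H : Edge 𝕀, O H = a ∧ b ∈ H.1 ∧ b ≠ a

theorem IsIntervalHypergraph.mem_of_le_of_le (h𝕀 : IsIntervalHypergraph n 𝕀) {H : Finset ℕ}
    (hH : H ∈ 𝕀) {u v w : ℕ} (hu : u ∈ H) (hv : v ∈ H) (huw : u ≤ w) (hwv : w ≤ v) :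
    w ∈ H := by
  obtain ⟨a, b, -, -, -, rfl⟩ := h𝕀.1 H hH
  simp only [Finset.mem_Icc] at *
  omega

theorem IsIntervalHypergraph.one_le_and_le_of_mem (h𝕀 : IsIntervalHypergraph n 𝕀) {H : Finset ℕ}
    (hH : H ∈ 𝕀) {x : ℕ} (hx : x ∈ H) : 1 ≤ x ∧ x ≤ n := by
  obtain ⟨a, b, h1, -, h3, rfl⟩ := h𝕀.1 H hH
  simp only [Finset.mem_Icc] at hx
  omega

theorem isAcyclic_iff : IsAcyclic 𝕀 O ↔ ∀ z, ¬prec 𝕀 O z z := by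
  constructor
  · rintro hO z hz
    obtain ⟨m, hm, f, hf0, hfm, hf⟩ := hz.exists_seq
    choose E hE using show ∀ p < m, ∃ E : Edge 𝕀, O E = f p ∧ f (p + 1) ∈ E.1 ∧ f (p + 1) ≠ f p
      from hf
    have hm2 : 2 ≤ m := by
      by_contra hlt
      obtain rfl : m = 1 := by omega
      exact (hE 0 hm).2.2 (hfm.trans hf0.symm)
    set H : ℕ → Edge 𝕀 := fun p => E (p % m) (Nat.mod_lt _ hm)
    have hsrc : ∀ p ≤ m, O (H p) = f p := by
      intro p hp
      rcases hp.lt_or_eq with hp | rfl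
      · simp only [H, Nat.mod_eq_of_lt hp, (hE p hp).1]
      · simp only [H, Nat.mod_self, (hE 0 hm).1, hf0, hfm]
    refine hO ⟨m, H, hm2, by simp only [H, Nat.mod_self, Nat.zero_mod], fun p hp => ?_⟩
    rw [hsrc _ hp, hsrc _ hp.le]
    simpa only [H, Nat.mod_eq_of_lt hp] using (hE p hp).2
  · rintro h ⟨k, H, hk, hHk, hH⟩
    have hcyc := transGen_of_seq (r := step 𝕀 O) (f := fun p => O (H p)) (by omega)
      fun p hp => ⟨H p, rfl, hH p hp⟩
    simp only [hHk] at hcyc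
    exact h _ hcyc

theorem prec_irrefl (hO : IsAcyclic 𝕀 O) (z : ℕ) : ¬prec 𝕀 O z z :=
  isAcyclic_iff.1 hO z

theorem reflTransGen_step_source {E : Edge 𝕀} {b : ℕ} (hb : b ∈ E.1) :
    ReflTransGen (step 𝕀 O) (O E) b := by
  rcases eq_or_ne b (O E) with rfl | hne
  · exact .refl
  · exact .single ⟨E, rfl, hb, hne⟩

theorem prec_of_reflTransGen_source {E : Edge 𝕀} {u w : ℕ}
    (hu : ReflTransGen (step 𝕀 O) u (O E)) (hw : w ∈ E.1) (hne : w ≠ u) : prec 𝕀 O u w :=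
  (reflTransGen_iff_eq_or_transGen.1 (hu.trans (reflTransGen_step_source hw))).resolve_left hne

theorem source_eq_of_reflTransGen (hO : AcycOr 𝕀 O) {N E : Edge 𝕀} (hNE : N.1 ⊆ E.1)
    {v : ℕ} (hvN : v ∈ N.1) (hv : ReflTransGen (step 𝕀 O) v (O E)) : O N = v := by
  by_contra hne
  exact prec_irrefl hO.2 v <| TransGen.tail'
    (hv.trans (reflTransGen_step_source (hNE (hO.1 N)))) ⟨N, rfl, hvN, Ne.symm hne⟩

theorem source_eq_of_mem_of_mem (hcl : ClosedUnderIntersection 𝕀) (hO : AcycOr 𝕀 O)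
    {H W : Edge 𝕀} (hHW : O H ∈ W.1) (hWH : O W ∈ H.1) : O H = O W := by
  let K : Edge 𝕀 := ⟨H.1 ∩ W.1, hcl _ H.2 _ W.2 ⟨O H, mem_inter.2 ⟨hO.1 H, hHW⟩⟩⟩
  have hKH : O K = O H :=
    source_eq_of_reflTransGen hO inter_subset_left (mem_inter.2 ⟨hO.1 H, hHW⟩) .refl
  have hKW : O K = O W :=
    source_eq_of_reflTransGen hO inter_subset_right (mem_inter.2 ⟨hWH, hO.1 W⟩) .refl
  exact hKH.symm.trans hKW

theorem prec_of_lt_of_lt (h𝕀 : IsIntervalHypergraph n 𝕀) (hO : IsOrientation 𝕀 O)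
    {u v w : ℕ} (h : prec 𝕀 O u v) (huw : u < w) (hwv : w < v) : prec 𝕀 O u w := by
  obtain ⟨-, b, hu, ⟨E, rfl, hbE, -⟩, -, hw, hwb⟩ := h.exists_cross huw.le hwv
  exact prec_of_reflTransGen_source hu (h𝕀.mem_of_le_of_le E.2 (hO E) hbE hw hwb.le) huw.ne'

theorem prec_of_gt_of_gt (h𝕀 : IsIntervalHypergraph n 𝕀) (hO : IsOrientation 𝕀 O)
    {u v w : ℕ} (h : prec 𝕀 O u v) (hvw : v < w) (hwu : w < u) : prec 𝕀 O u w := by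
  obtain ⟨-, b, hu, ⟨E, rfl, hbE, -⟩, -, hw, hbw⟩ := h.exists_cross_down hwu.le hvw
  exact prec_of_reflTransGen_source hu (h𝕀.mem_of_le_of_le E.2 hbE (hO E) hbw.le hw) hwu.ne

theorem not_prec_of_prec_of_le (h𝕀 : IsIntervalHypergraph n 𝕀)
    (hcl : ClosedUnderIntersection 𝕀) {A B : Edge 𝕀 → ℕ} (hA : AcycOr 𝕀 A) (hB : AcycOr 𝕀 B)
    (hAB : ∀ H, A H ≤ B H) {i j : ℕ} (hij : i < j) (hji : prec 𝕀 A j i) :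
    ¬prec 𝕀 B i j := by
  obtain ⟨d, hd⟩ : ∃ d, j - i = d := ⟨_, rfl⟩
  induction d using Nat.strong_induction_on generalizing i j with
  | _ d ih =>
  intro hBij
  obtain ⟨-, b, hia, ⟨G, rfl, hbG, -⟩, hbj, hai, hib⟩ := hBij.exists_cross le_rfl hij
  have hjb : j ≤ b := by
    by_contra! hbj'
    have hbj'' : prec 𝕀 B b j :=
      (reflTransGen_iff_eq_or_transGen.1 hbj).resolve_left hbj'.ne'
    exact ih (j - b) (by omega) hbj' (prec_of_gt_of_gt h𝕀 hA.1 hji hib hbj') rfl hbj''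
  obtain ⟨-, x, hjx, ⟨E, rfl, hxE, -⟩, hxi, hjA, hxj⟩ := hji.exists_cross_down le_rfl hij
  have hxi' : x ≤ i := by
    by_contra! hix
    have hxi'' : prec 𝕀 A x i :=
      (reflTransGen_iff_eq_or_transGen.1 hxi).resolve_left hix.ne
    exact ih (x - i) (by omega) hix hxi'' rfl (prec_of_lt_of_lt h𝕀 hB.1 hBij hix hxj)
  have hiN : i ∈ E.1 ∩ G.1 := mem_inter.2
    ⟨h𝕀.mem_of_le_of_le E.2 hxE (hA.1 E) hxi' (by omega),
      h𝕀.mem_of_le_of_le G.2 (hB.1 G) hbG hai (by omega)⟩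
  have hjN : j ∈ E.1 ∩ G.1 := mem_inter.2
    ⟨h𝕀.mem_of_le_of_le E.2 hxE (hA.1 E) (by omega) hjA,
      h𝕀.mem_of_le_of_le G.2 (hB.1 G) hbG (by omega) hjb⟩
  let N : Edge 𝕀 := ⟨E.1 ∩ G.1, hcl _ E.2 _ G.2 ⟨i, hiN⟩⟩
  have hAN : A N = j := source_eq_of_reflTransGen hA inter_subset_left hjN hjx
  have hBN : B N = i := source_eq_of_reflTransGen hB inter_subset_right hiN hia
  have := hAB N
  omega

theorem le_of_leP {A B : Edge 𝕀 → ℕ} (h : leP n 𝕀 A B) (H : Edge 𝕀) : A H ≤ B H := by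
  induction h with
  | refl => exact le_rfl
  | @tail C D _ hCD ih =>
    obtain ⟨-, -, i, j, -, -, hij, -, hflip⟩ := hCD
    refine ih.trans ?_
    by_cases he : C H = D H
    · exact he.le
    · obtain ⟨hi, hj⟩ := (hflip H).1 he
      omega

def flipAt (O : Edge 𝕀 → ℕ) (i j : ℕ) (H : Edge 𝕀) : ℕ :=
  if i ∈ H.1 ∧ j ∈ H.1 ∧ O H = i then j else O H

section Flip

variable {i j : ℕ} {H : Edge 𝕀}

theorem flipAt_of_flipped (h : i ∈ H.1 ∧ j ∈ H.1 ∧ O H = i) : flipAt O i j H = j :=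
  if_pos h

theorem flipAt_of_not_flipped (h : ¬(i ∈ H.1 ∧ j ∈ H.1 ∧ O H = i)) : flipAt O i j H = O H :=
  if_neg h

theorem isOrientation_flipAt (hO : IsOrientation 𝕀 O) : IsOrientation 𝕀 (flipAt O i j) := by
  intro H
  by_cases h : i ∈ H.1 ∧ j ∈ H.1 ∧ O H = i
  · rw [flipAt_of_flipped h]
    exact h.2.1
  · rw [flipAt_of_not_flipped h]
    exact hO H

theorem le_flipAt (hij : i ≤ j) (H : Edge 𝕀) : O H ≤ flipAt O i j H := by
  by_cases h : i ∈ H.1 ∧ j ∈ H.1 ∧ O H = i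
  · rw [flipAt_of_flipped h, h.2.2]
    exact hij
  · rw [flipAt_of_not_flipped h]

theorem isIncFlip_flipAt (hi : 1 ≤ i) (hij : i < j) (hjn : j ≤ n)
    (hW : i ∈ H.1 ∧ j ∈ H.1 ∧ O H = i) (hnot : ∀ H : Edge 𝕀, i ∈ H.1 → j ∈ H.1 → O H ≠ j) :
    IsIncFlip n 𝕀 i j O (flipAt O i j) := by
  refine ⟨fun h => ?_, hi, hij, hjn, fun H => ⟨fun hne => ?_, fun hiH hjH => ?_⟩⟩
  · have := congrFun h H
    rw [flipAt_of_flipped hW, hW.2.2] at this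
    omega
  · by_cases h : i ∈ H.1 ∧ j ∈ H.1 ∧ O H = i
    · exact ⟨h.2.2, flipAt_of_flipped h⟩
    · exact absurd (flipAt_of_not_flipped h).symm hne
  · by_cases h : O H = i
    · exact iff_of_true h (flipAt_of_flipped ⟨hiH, hjH, h⟩)
    · rw [flipAt_of_not_flipped fun h' => h h'.2.2]
      exact iff_of_false h (hnot H hiH hjH)

end Flip

def IsMaxDisagreement (A B : Edge 𝕀 → ℕ) (W : Edge 𝕀) : Prop :=
  A W ≠ B W ∧ ∀ K, A K ≠ B K → toLex (A K, B K) ≤ toLex (A W, B W)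

theorem exists_isMaxDisagreement {A B : Edge 𝕀 → ℕ} (hne : A ≠ B) :
    ∃ W, IsMaxDisagreement A B W := by
  classical
  obtain ⟨H, hH⟩ := Function.ne_iff.1 hne
  obtain ⟨W, hW, hmax⟩ := exists_max_image (univ.filter fun K => A K ≠ B K)
    (fun K => toLex (A K, B K)) ⟨H, by simpa using hH⟩
  exact ⟨W, (mem_filter.1 hW).2, fun K hK => hmax K (by simpa using hK)⟩

namespace IsMaxDisagreement

variable {A B : Edge 𝕀 → ℕ} {W : Edge 𝕀}

theorem source_le (hW : IsMaxDisagreement A B W) {K : Edge 𝕀} (hK : A K ≠ B K) :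
    A K ≤ A W := by
  rcases Prod.Lex.toLex_le_toLex.1 (hW.2 K hK) with h | ⟨h, -⟩
  exacts [h.le, h.le]

theorem target_le (hW : IsMaxDisagreement A B W) {K : Edge 𝕀} (hK : A K ≠ B K)
    (hKW : A K = A W) : B K ≤ B W := by
  rcases Prod.Lex.toLex_le_toLex.1 (hW.2 K hK) with h | ⟨-, h⟩
  exacts [absurd hKW h.ne, h]

theorem source_lt_target (hAB : ∀ H, A H ≤ B H) (hW : IsMaxDisagreement A B W) :
    A W < B W :=
  (hAB W).lt_of_ne hW.1

theorem target_eq_of_flipped (h𝕀 : IsIntervalHypergraph n 𝕀) (hcl : ClosedUnderIntersection 𝕀)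
    (hA : IsOrientation 𝕀 A) (hB : AcycOr 𝕀 B) (hAB : ∀ H, A H ≤ B H)
    (hW : IsMaxDisagreement A B W) {H : Edge 𝕀} (hjH : B W ∈ H.1) (hAH : A H = A W) :
    B H = B W := by
  have hij := hW.source_lt_target hAB
  have hiB : A W ≤ B H := hAH ▸ hAB H
  rcases lt_trichotomy (B H) (B W) with hlt | heq | hgt
  · have hBHW : B H ∈ W.1 := h𝕀.mem_of_le_of_le W.2 (hA W) (hB.1 W) hiB hlt.le
    exact source_eq_of_mem_of_mem hcl hB hBHW hjH
  · exact heq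
  · have := hW.target_le (K := H) (by omega) hAH
    omega

theorem source_ne_target (hcl : ClosedUnderIntersection 𝕀) (hA : AcycOr 𝕀 A)
    (hB : IsOrientation 𝕀 B) (hW : IsMaxDisagreement A B W) {H : Edge 𝕀} (hiH : A W ∈ H.1) :
    A H ≠ B W := fun h =>
  hW.1 (h ▸ source_eq_of_mem_of_mem hcl hA (h ▸ hB W) hiH).symm

theorem flipAt_step_invariant (h𝕀 : IsIntervalHypergraph n 𝕀) (hA : AcycOr 𝕀 A)
    (hB : AcycOr 𝕀 B) (hAB : ∀ H, A H ≤ B H) (hW : IsMaxDisagreement A B W) {v c : ℕ}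
    (hv : ReflTransGen (step 𝕀 A) (A W) v ∧ (v < A W ∨ prec 𝕀 B (B W) v))
    (hvc : step 𝕀 (flipAt A (A W) (B W)) v c) :
    ReflTransGen (step 𝕀 A) (A W) c ∧ (c < A W ∨ prec 𝕀 B (B W) c) := by
  have hij := hW.source_lt_target hAB
  obtain ⟨hiv, hvB⟩ := hv
  obtain ⟨E, hCE, hcE, hcv⟩ := hvc
  have hvj : v ≠ B W := by
    rintro rfl
    rcases hvB with h | h
    exacts [by omega, prec_irrefl hB.2 _ h]
  have hE : ¬(A W ∈ E.1 ∧ B W ∈ E.1 ∧ A E = A W) := fun hE =>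
    hvj (by rw [← hCE, flipAt_of_flipped hE])
  have hAE : A E = v := by rw [← hCE, flipAt_of_not_flipped hE]
  refine ⟨hiv.tail ⟨E, hAE, hcE, hcv⟩, ?_⟩
  rcases lt_or_ge c (A W) with hci | hic
  · exact .inl hci
  refine .inr ?_
  rcases lt_or_ge v (A W) with hvi | hiv'
  · -- the step from `v` to `c` jumps over `A W`, closing an `A`-cycle through `A W`
    have hiE : A W ∈ E.1 := h𝕀.mem_of_le_of_le E.2 (hAE ▸ hA.1 E) hcE hvi.le hic
    exact absurd (TransGen.tail' hiv ⟨E, hAE, hiE, hvi.ne'⟩) (prec_irrefl hA.2 _)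
  have hjv : prec 𝕀 B (B W) v := hvB.resolve_left (not_lt.2 hiv')
  by_cases hd : A E = B E
  · exact hjv.trans_left (hAE ▸ hd ▸ reflTransGen_step_source hcE)
  · -- `E` is oriented by `B` towards a point of `(A W, B W) ⊆ W`
    have hvi : A E = A W := le_antisymm (hW.source_le hd) (hAE ▸ hiv')
    have hjE : B W ∉ E.1 := fun hjE => hE ⟨hvi ▸ hA.1 E, hjE, hvi⟩
    have hBE : B E ≠ B W := fun h => hjE (h ▸ hB.1 E)
    have hBEW : B E ∈ W.1 := h𝕀.mem_of_le_of_le W.2 (hA.1 W) (hB.1 W)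
      (hvi ▸ hAB E) (hW.target_le hd hvi)
    exact TransGen.head' ⟨W, rfl, hBEW, hBE⟩ (reflTransGen_step_source hcE)

theorem isAcyclic_flipAt (h𝕀 : IsIntervalHypergraph n 𝕀) (hcl : ClosedUnderIntersection 𝕀)
    (hA : AcycOr 𝕀 A) (hB : AcycOr 𝕀 B) (hAB : ∀ H, A H ≤ B H)
    (hW : IsMaxDisagreement A B W) : IsAcyclic 𝕀 (flipAt A (A W) (B W)) := by
  refine isAcyclic_iff.2 (not_transGen_self_of_exit (s := step 𝕀 A) (j := B W)
    (isAcyclic_iff.1 hA.2) ?_ (fun _ _ hv hvc => flipAt_step_invariant h𝕀 hA hB hAB hW hv hvc)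
    ?_)
  · rintro a b ⟨E, hCE, hbE, hba⟩
    by_cases hE : A W ∈ E.1 ∧ B W ∈ E.1 ∧ A E = A W
    · rw [flipAt_of_flipped hE] at hCE
      subst hCE
      have hBE := hW.target_eq_of_flipped h𝕀 hcl hA.1 hB hAB hE.2.1 hE.2.2
      exact .inr ⟨rfl, hE.2.2 ▸ reflTransGen_step_source hbE, .inr (.single ⟨E, hBE, hbE, hba⟩)⟩
    · rw [flipAt_of_not_flipped hE] at hCE
      exact .inl ⟨E, hCE, hbE, hba⟩
  · rintro ⟨-, h | h⟩
    · exact absurd h (not_lt.2 (hW.source_lt_target hAB).le)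
    · exact prec_irrefl hB.2 _ h

theorem flipStep_flipAt (h𝕀 : IsIntervalHypergraph n 𝕀) (hcl : ClosedUnderIntersection 𝕀)
    (hA : AcycOr 𝕀 A) (hB : AcycOr 𝕀 B) (hAB : ∀ H, A H ≤ B H)
    (hW : IsMaxDisagreement A B W) : FlipStep n 𝕀 A (flipAt A (A W) (B W)) :=
  ⟨hA, ⟨isOrientation_flipAt hA.1, hW.isAcyclic_flipAt h𝕀 hcl hA hB hAB⟩, A W, B W,
    isIncFlip_flipAt (h𝕀.one_le_and_le_of_mem W.2 (hA.1 W)).1 (hW.source_lt_target hAB)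
      (h𝕀.one_le_and_le_of_mem W.2 (hB.1 W)).2 ⟨hA.1 W, hB.1 W, rfl⟩
      fun _ hiH _ => hW.source_ne_target hcl hA hB.1 hiH⟩

theorem flipAt_le (h𝕀 : IsIntervalHypergraph n 𝕀) (hcl : ClosedUnderIntersection 𝕀)
    (hA : IsOrientation 𝕀 A) (hB : AcycOr 𝕀 B) (hAB : ∀ H, A H ≤ B H)
    (hW : IsMaxDisagreement A B W) (H : Edge 𝕀) : flipAt A (A W) (B W) H ≤ B H := by
  by_cases hH : A W ∈ H.1 ∧ B W ∈ H.1 ∧ A H = A W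
  · rw [flipAt_of_flipped hH, hW.target_eq_of_flipped h𝕀 hcl hA hB hAB hH.2.1 hH.2.2]
  · rw [flipAt_of_not_flipped hH]
    exact hAB H

end IsMaxDisagreement

theorem leP_of_le (h𝕀 : IsIntervalHypergraph n 𝕀) (hcl : ClosedUnderIntersection 𝕀)
    {A B : Edge 𝕀 → ℕ} (hA : AcycOr 𝕀 A) (hB : AcycOr 𝕀 B) (hAB : ∀ H, A H ≤ B H) :
    leP n 𝕀 A B := by
  obtain ⟨d, hd⟩ : ∃ d, ∑ H, (B H - A H) = d := ⟨_, rfl⟩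
  induction d using Nat.strong_induction_on generalizing A with
  | _ d ih =>
  by_cases hne : A = B
  · exact hne ▸ .refl
  obtain ⟨W, hW⟩ := exists_isMaxDisagreement hne
  have hflip := hW.flipStep_flipAt h𝕀 hcl hA hB hAB
  have hle := le_flipAt (O := A) (hW.source_lt_target hAB).le
  have hCB := hW.flipAt_le h𝕀 hcl hA.1 hB hAB
  have hlt : ∑ H, (B H - flipAt A (A W) (B W) H) < d := by
    refine hd ▸ sum_lt_sum (fun H _ => Nat.sub_le_sub_left (hle H) _) ⟨W, mem_univ _, ?_⟩
    have := hW.source_lt_target hAB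
    rw [flipAt_of_flipped ⟨hA.1 W, hB.1 W, rfl⟩]
    omega
  exact .head hflip (ih _ hlt hflip.2.1 hCB rfl)

theorem stmt12_general (n : ℕ) (𝕀 : Finset (Finset ℕ))
    (h𝕀 : IsIntervalHypergraph n 𝕀) (hcl : ClosedUnderIntersection 𝕀)
    (A B : Edge 𝕀 → ℕ) (hA : AcycOr 𝕀 A) (hB : AcycOr 𝕀 B) :
    (leP n 𝕀 A B ↔ ∀ H : Edge 𝕀, A H ≤ B H) ∧
    (leP n 𝕀 A B ↔
      ∀ i j, 1 ≤ i → i < j → j ≤ n → prec 𝕀 A j i → ¬prec 𝕀 B i j) := by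
  have hab : leP n 𝕀 A B ↔ ∀ H, A H ≤ B H := ⟨le_of_leP, leP_of_le h𝕀 hcl hA hB⟩
  refine ⟨hab, hab.trans ⟨fun hle i j _ hij _ => not_prec_of_prec_of_le h𝕀 hcl hA hB hle hij,
    fun h H => ?_⟩⟩
  by_contra! hlt
  exact h (B H) (A H) (h𝕀.one_le_and_le_of_mem H.2 (hB.1 H)).1 hlt
    (h𝕀.one_le_and_le_of_mem H.2 (hA.1 H)).2
    (.single ⟨H, rfl, hB.1 H, hlt.ne⟩) (.single ⟨H, rfl, hA.1 H, hlt.ne'⟩)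

/-- For an interval hypergraph `𝕀` closed under intersection and
acyclic orientations `A, B`, the following are equivalent: (a) `A ≤ B` in `P_𝕀`;
(b) `A(I) ≤ B(I)` for all `I ∈ 𝕀`; (c) for all `1 ≤ i < j ≤ n`, `j ≺_A i` implies
`¬ (i ≺_B j)`. -/
theorem stmt12 (n : ℕ) (hn : 1 ≤ n) (𝕀 : Finset (Finset ℕ))
    (h𝕀 : IsIntervalHypergraph n 𝕀) (hcl : ClosedUnderIntersection 𝕀)
    (A B : Edge 𝕀 → ℕ) (hA : AcycOr 𝕀 A) (hB : AcycOr 𝕀 B) :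
    (leP n 𝕀 A B ↔ ∀ H : Edge 𝕀, A H ≤ B H) ∧
    (leP n 𝕀 A B ↔
      ∀ i j, 1 ≤ i → i < j → j ≤ n → prec 𝕀 A j i → ¬prec 𝕀 B i j) :=
  stmt12_general n 𝕀 h𝕀 hcl A B hA hB
end IHL
end

section
/- Let 𝕀 be an interval hypergraph on [n] that is closed under intersection. Then for every j ∈ 𝒥_𝕀, the acyclic orientation A_j is join irreducible in the hypergraphic poset P_𝕀, i.e., A_j is not the minimal element of P_𝕀 and A_j covers exactly one element of P_𝕀. -/
namespace IHL

/-!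
Write `μ = μ_j` and call a hyperedge *anchored* if it contains `j` and has minimum `μ`: these are
the hyperedges on which `A_j` is not the minimum, and closure under intersection makes `J_j` one
of them. An increasing flip ending at `A_j` can only move the value `j` on the anchored hyperedges
down to a common `i`, so every element covered by `A_j` is an orientation `A_j[i]` sending the
anchored hyperedges to `i`. Such an orientation is acyclic, and flips up to `A_j`, when `i ∈ [μ, j)`
is *free*, i.e. the minimum of every hyperedge inside `[μ, j)` that contains it. For free `i < i'`,
`A_j[i]` flips up to `A_j[i']`, while the sum of the values of an orientation strictly increases
along flips. Hence `A_j[μ] < A_j`, and the only lower cover of `A_j` is `A_j[i]` for the largest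
free `i < j`.
-/

section Orientations

variable {n : ℕ} {𝕀 : Finset (Finset ℕ)} {O O' : Edge 𝕀 → ℕ}

def weight (O : Edge 𝕀 → ℕ) : ℕ := ∑ H, O H

theorem isAcyclic_of_potential (φ : ℕ → ℕ)
    (hφ : ∀ H : Edge 𝕀, ∀ b ∈ H.1, b ≠ O H → φ (O H) < φ b) : IsAcyclic 𝕀 O := by
  rintro ⟨k, H, hk, hHk, hcyc⟩
  have hgrow : ∀ p ≤ k, φ (O (H 0)) + p ≤ φ (O (H p)) := by
    intro p hp
    induction p with
    | zero => simp
    | succ p ih =>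
      have := hφ (H p) _ (hcyc p (by omega)).1 (hcyc p (by omega)).2
      have := ih (by omega)
      omega
  have := hgrow k le_rfl
  rw [hHk] at this
  omega

theorem IsAcyclic.not_two_cycle (hO : IsAcyclic 𝕀 O) {H₁ H₂ : Edge 𝕀} (h₁ : O H₂ ∈ H₁.1)
    (h₂ : O H₁ ∈ H₂.1) (hne : O H₁ ≠ O H₂) : False :=
  hO ⟨2, fun p => if p % 2 = 0 then H₁ else H₂, le_rfl, rfl, by
    intro p hp
    interval_cases p <;> simp [h₁, h₂, hne, hne.symm]⟩

theorem FlipStep.weight_lt (h : FlipStep n 𝕀 O O') : weight O < weight O' := by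
  obtain ⟨-, -, i, j, hne, -, hij, -, hflip⟩ := h
  obtain ⟨H₀, hH₀⟩ := Function.ne_iff.mp hne
  refine Finset.sum_lt_sum (fun H _ => ?_) ⟨H₀, Finset.mem_univ _, ?_⟩
  · by_cases hH : O H = O' H
    · exact hH.le
    · have := (hflip H).1 hH
      omega
  · have := (hflip H₀).1 hH₀
    omega

theorem leP.weight_le (h : leP n 𝕀 O O') : weight O ≤ weight O' := by
  induction h with
  | refl => exact le_rfl
  | tail _ hstep ih => exact ih.trans hstep.weight_lt.le

theorem FlipStep.ltP (h : FlipStep n 𝕀 O O') : ltP n 𝕀 O O' :=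
  ⟨.single h, h.2.2.elim fun _ ⟨_, hne, _⟩ => hne⟩

theorem FlipStep.not_leP (h : FlipStep n 𝕀 O O') : ¬leP n 𝕀 O' O :=
  fun h' => lt_irrefl _ (h.weight_lt.trans_le h'.weight_le)

theorem ltP.weight_lt (h : ltP n 𝕀 O O') : weight O < weight O' := by
  obtain ⟨hle, hne⟩ := h
  obtain rfl | ⟨C, hstep, hC⟩ := Relation.ReflTransGen.cases_head hle
  · exact absurd rfl hne
  · exact hstep.weight_lt.trans_le (leP.weight_le hC)

theorem ltP.exists_flipStep (h : ltP n 𝕀 O O') : ∃ D, leP n 𝕀 O D ∧ FlipStep n 𝕀 D O' := by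
  obtain ⟨hle, hne⟩ := h
  obtain rfl | hD := Relation.ReflTransGen.cases_tail hle
  · exact absurd rfl hne
  · exact hD

end Orientations

section IntervalHypergraphs

variable {n : ℕ} {𝕀 : Finset (Finset ℕ)} {H : Finset ℕ} {x : ℕ}

theorem IsIntervalHypergraph.ordConnected (h𝕀 : IsIntervalHypergraph n 𝕀) (hH : H ∈ 𝕀) :
    (H : Set ℕ).OrdConnected := by
  obtain ⟨a, b, -, -, -, rfl⟩ := h𝕀.1 H hH
  rw [Finset.coe_Icc]
  exact Set.ordConnected_Icc

theorem IsIntervalHypergraph.mem_Icc (h𝕀 : IsIntervalHypergraph n 𝕀) (hH : H ∈ 𝕀)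
    (hx : x ∈ H) : 1 ≤ x ∧ x ≤ n := by
  obtain ⟨a, b, ha, -, hb, rfl⟩ := h𝕀.1 H hH
  rw [Finset.mem_Icc] at hx
  omega

theorem ClosedUnderIntersection.inf'_mem (hcl : ClosedUnderIntersection 𝕀)
    {T : Finset (Finset ℕ)} (hT𝕀 : T ⊆ 𝕀) (hT : T.Nonempty) {j : ℕ} (hj : ∀ I ∈ T, j ∈ I) :
    T.inf' hT id ∈ 𝕀 :=
  (Finset.inf'_induction hT id (p := fun K => K ∈ 𝕀 ∧ j ∈ K)
    (fun _ h₁ _ h₂ =>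
      have hj : j ∈ _ ∩ _ := Finset.mem_inter.2 ⟨h₁.2, h₂.2⟩
      ⟨hcl _ h₁.1 _ h₂.1 ⟨j, hj⟩, hj⟩)
    fun I hI => ⟨hT𝕀 hI, hj I hI⟩).1

theorem IsJj.mem (hcl : ClosedUnderIntersection 𝕀) {j : ℕ} (hjJ : InJI 𝕀 j) {Jj : Finset ℕ}
    (hJj : IsJj 𝕀 j Jj) : Jj ∈ 𝕀 := by
  classical
  set S := 𝕀.filter fun I => j ∈ I ∧ ∃ y ∈ I, y < j
  obtain ⟨I₀, hI₀, hjI₀⟩ := hjJ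
  have hS : S.Nonempty := ⟨I₀, Finset.mem_filter.2 ⟨hI₀, hjI₀⟩⟩
  have hJjS : Jj = S.inf' hS id := by
    ext x
    simp [S, hJj x]
  rw [hJjS]
  exact hcl.inf'_mem (Finset.filter_subset _ _) hS fun I hI => (Finset.mem_filter.1 hI).2.1

end IntervalHypergraphs

def Anchored (j μ : ℕ) (H : Finset ℕ) : Prop :=
  j ∈ H ∧ IsLeast (H : Set ℕ) μ

/-- The properties of `A_j` and of `μ = μ_j` on which the argument rests. -/
structure IsAjSetting (n : ℕ) (𝕀 : Finset (Finset ℕ)) (j μ : ℕ) (Aj : Edge 𝕀 → ℕ) : Prop where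
  ordConnected : ∀ H ∈ 𝕀, (H : Set ℕ).OrdConnected
  isAj : IsAj 𝕀 j μ Aj
  one_le : 1 ≤ μ
  lt : μ < j
  le : j ≤ n
  mem_of_lt : ∀ H ∈ 𝕀, j ∈ H → ∀ a ∈ H, a < j → μ ∈ H
  exists_anchored : ∃ H ∈ 𝕀, Anchored j μ H

theorem isAjSetting_of_isJj {n : ℕ} {𝕀 : Finset (Finset ℕ)} {j μ : ℕ} {Jj : Finset ℕ}
    {Aj : Edge 𝕀 → ℕ} (h𝕀 : IsIntervalHypergraph n 𝕀) (hcl : ClosedUnderIntersection 𝕀)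
    (hjJ : InJI 𝕀 j) (hJj : IsJj 𝕀 j Jj) (hμ : IsLeast (Jj : Set ℕ) μ) (hAj : IsAj 𝕀 j μ Aj) :
    IsAjSetting n 𝕀 j μ Aj := by
  obtain ⟨I₀, hI₀, hjI₀, y, hyI₀, hyj⟩ := hjJ
  have hμI₀ : μ ∈ I₀ := (hJj μ).1 hμ.1 I₀ hI₀ hjI₀ ⟨y, hyI₀, hyj⟩
  have hpred : j - 1 ∈ Jj := (hJj _).2 fun I hI hjI ⟨y, hyI, hyj⟩ =>
    (h𝕀.ordConnected hI).out hyI hjI ⟨by omega, by omega⟩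
  have := hμ.2 hpred
  have := h𝕀.mem_Icc hI₀ hμI₀
  have := h𝕀.mem_Icc hI₀ hjI₀
  exact
    { ordConnected := fun _ => h𝕀.ordConnected
      isAj := hAj
      one_le := by omega
      lt := by omega
      le := by omega
      mem_of_lt := fun H hH hjH a ha haj => (hJj μ).1 hμ.1 H hH hjH ⟨a, ha, haj⟩
      exists_anchored :=
        ⟨Jj, hJj.mem hcl ⟨I₀, hI₀, hjI₀, y, hyI₀, hyj⟩, (hJj j).2 fun _ _ hjI _ => hjI, hμ⟩ }

def IsFree (𝕀 : Finset (Finset ℕ)) (μ j m : ℕ) : Prop :=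
  μ ≤ m ∧ m ≤ j ∧ ∀ K ∈ 𝕀, (∀ x ∈ K, μ ≤ x ∧ x < j) → m ∈ K → ∀ y ∈ K, m ≤ y

def freeBelow (𝕀 : Finset (Finset ℕ)) (μ j : ℕ) : Set ℕ :=
  {m | IsFree 𝕀 μ j m ∧ m < j}

open Classical in
/-- `retarget Aj j μ i` is `A_j[i]`: `A_j` with the value `j` replaced by `i`. -/
noncomputable def retarget {𝕀 : Finset (Finset ℕ)} (Aj : Edge 𝕀 → ℕ) (j μ i : ℕ) :
    Edge 𝕀 → ℕ :=
  fun H => if Anchored j μ H.1 then i else Aj H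

section Retarget

variable {n : ℕ} {𝕀 : Finset (Finset ℕ)} {j μ i i' : ℕ} {Aj : Edge 𝕀 → ℕ} {H : Edge 𝕀}

theorem isFree_left (hμj : μ ≤ j) : IsFree 𝕀 μ j μ :=
  ⟨le_rfl, hμj, fun _ _ hK _ _ hy => (hK _ hy).1⟩

theorem isFree_right (hμj : μ ≤ j) : IsFree 𝕀 μ j j :=
  ⟨hμj, le_rfl, fun _ _ hK hjK => absurd (hK j hjK).2 (lt_irrefl j)⟩

theorem exists_isGreatest_freeBelow (hμj : μ < j) : ∃ i, IsGreatest (freeBelow 𝕀 μ j) i :=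
  BddAbove.exists_isGreatest_of_nonempty ⟨j, fun _ hm => hm.2.le⟩ ⟨μ, isFree_left hμj.le, hμj⟩

theorem retarget_of_anchored (hH : Anchored j μ H.1) : retarget Aj j μ i H = i :=
  if_pos hH

theorem retarget_of_not_anchored (hH : ¬Anchored j μ H.1) : retarget Aj j μ i H = Aj H :=
  if_neg hH

theorem weight_retarget_le (hii' : i ≤ i') :
    weight (retarget Aj j μ i) ≤ weight (retarget Aj j μ i') :=
  Finset.sum_le_sum fun H _ => by
    unfold retarget
    split_ifs <;> omega

end Retarget

namespace IsAjSetting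

variable {n : ℕ} {𝕀 : Finset (Finset ℕ)} {j μ i i' : ℕ} {Aj : Edge 𝕀 → ℕ}

theorem apply_of_anchored (h : IsAjSetting n 𝕀 j μ Aj) {H : Edge 𝕀} (hH : Anchored j μ H.1) :
    Aj H = j :=
  (h.isAj H).1 hH

theorem isLeast_apply (h : IsAjSetting n 𝕀 j μ Aj) {H : Edge 𝕀} (hH : ¬Anchored j μ H.1) :
    IsLeast (H.1 : Set ℕ) (Aj H) :=
  (h.isAj H).2 hH

theorem mem_of_anchored (h : IsAjSetting n 𝕀 j μ Aj) {H : Finset ℕ} (hH𝕀 : H ∈ 𝕀)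
    (hH : Anchored j μ H) {x : ℕ} (hx : x ∈ Set.Icc μ j) : x ∈ H :=
  (h.ordConnected H hH𝕀).out hH.2.1 hH.1 hx

theorem retarget_self (h : IsAjSetting n 𝕀 j μ Aj) : retarget Aj j μ j = Aj := by
  funext H
  by_cases hH : Anchored j μ H.1
  · rw [retarget_of_anchored hH, h.apply_of_anchored hH]
  · rw [retarget_of_not_anchored hH]

theorem retarget_injective (h : IsAjSetting n 𝕀 j μ Aj) :
    Function.Injective (retarget Aj j μ) := by
  obtain ⟨H, hH𝕀, hH⟩ := h.exists_anchored
  intro i i' hii'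
  simpa only [retarget_of_anchored (H := ⟨H, hH𝕀⟩) hH] using congrFun hii' ⟨H, hH𝕀⟩

theorem min_lt_of_isFree (h : IsAjSetting n 𝕀 j μ Aj) {H : Finset ℕ} (hH𝕀 : H ∈ 𝕀)
    (hH : ¬Anchored j μ H) {m : ℕ} (hm : IsLeast (H : Set ℕ) m) (hi : IsFree 𝕀 μ j i)
    (hiH : i ∈ H) (hmi : m < i) : m < μ := by
  by_contra! hμm
  by_cases hjH : j ∈ H
  · have hμH := h.mem_of_lt H hH𝕀 hjH m hm.1 (hmi.trans_le hi.2.1)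
    exact hH ⟨hjH, le_antisymm (hm.2 hμH) hμm ▸ hm⟩
  · have hbelow : ∀ x ∈ H, μ ≤ x ∧ x < j := fun x hx => by
      refine ⟨hμm.trans (hm.2 hx), lt_of_not_ge fun hjx => hjH ?_⟩
      exact (h.ordConnected H hH𝕀).out hiH hx ⟨hi.2.1, hjx⟩
    exact (hi.2.2 H hH𝕀 hbelow hiH m hm.1).not_gt hmi

theorem acycOr_retarget (h : IsAjSetting n 𝕀 j μ Aj) (hi : IsFree 𝕀 μ j i) :
    AcycOr 𝕀 (retarget Aj j μ i) := by
  -- a linear extension of the orientation: `i` is inserted just below `μ`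
  refine ⟨fun H => ?_,
    isAcyclic_of_potential (fun x => if x = i then 2 * μ else 2 * x + 1) fun H b hb hbH => ?_⟩
  · by_cases hH : Anchored j μ H.1
    · rw [retarget_of_anchored hH]
      exact h.mem_of_anchored H.2 hH ⟨hi.1, hi.2.1⟩
    · rw [retarget_of_not_anchored hH]
      exact (h.isLeast_apply hH).1
  · by_cases hH : Anchored j μ H.1
    · rw [retarget_of_anchored hH] at hbH ⊢
      have : μ ≤ b := hH.2.2 hb
      rw [if_pos rfl, if_neg hbH]
      omega
    · rw [retarget_of_not_anchored hH] at hbH ⊢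
      have hm := h.isLeast_apply hH
      have hmb : Aj H < b := lt_of_le_of_ne (hm.2 hb) (Ne.symm hbH)
      rcases eq_or_ne b i with rfl | hbi
      · have := h.min_lt_of_isFree H.2 hH hm hi hb hmb
        rw [if_pos rfl, if_neg hmb.ne]
        omega
      · have := hi.1
        split_ifs <;> omega

theorem acycOr (h : IsAjSetting n 𝕀 j μ Aj) : AcycOr 𝕀 Aj :=
  h.retarget_self ▸ h.acycOr_retarget (isFree_right h.lt.le)

theorem flipStep_retarget (h : IsAjSetting n 𝕀 j μ Aj) (hi : IsFree 𝕀 μ j i)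
    (hi' : IsFree 𝕀 μ j i') (hii' : i < i') :
    FlipStep n 𝕀 (retarget Aj j μ i) (retarget Aj j μ i') := by
  refine ⟨h.acycOr_retarget hi, h.acycOr_retarget hi', i, i',
    fun he => hii'.ne (h.retarget_injective he), h.one_le.trans hi.1, hii', hi'.2.1.trans h.le,
    fun H => ⟨fun hne => ?_, fun hiH hi'H => ?_⟩⟩
  · by_cases hH : Anchored j μ H.1
    · exact ⟨retarget_of_anchored hH, retarget_of_anchored hH⟩
    · simp only [retarget_of_not_anchored hH, ne_eq, not_true_eq_false] at hne
  · by_cases hH : Anchored j μ H.1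
    · simp only [retarget_of_anchored hH]
    · rw [retarget_of_not_anchored hH, retarget_of_not_anchored hH]
      have hm := h.isLeast_apply hH
      have hmi : Aj H ≤ i := hm.2 hiH
      have hmi' : Aj H ≠ i := fun he =>
        ((h.min_lt_of_isFree H.2 hH hm hi' hi'H (by omega)).trans_le hi.1).ne he
      exact iff_of_false hmi' (by omega)

theorem flipStep_retarget_Aj (h : IsAjSetting n 𝕀 j μ Aj) (hi : i ∈ freeBelow 𝕀 μ j) :
    FlipStep n 𝕀 (retarget Aj j μ i) Aj := by
  simpa only [h.retarget_self] using h.flipStep_retarget hi.1 (isFree_right h.lt.le) hi.2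

theorem not_forall_leP (h : IsAjSetting n 𝕀 j μ Aj) : ¬∀ B, AcycOr 𝕀 B → leP n 𝕀 Aj B :=
  fun hmin =>
    have hstep := h.flipStep_retarget_Aj ⟨isFree_left h.lt.le, h.lt⟩
    hstep.not_leP (hmin _ hstep.1)

theorem exists_eq_retarget_of_flipStep (h : IsAjSetting n 𝕀 j μ Aj) {C : Edge 𝕀 → ℕ}
    (hC : FlipStep n 𝕀 C Aj) : ∃ i ∈ freeBelow 𝕀 μ j, C = retarget Aj j μ i := by
  obtain ⟨⟨hCor, hCac⟩, -, i, j', hne, -, hij, -, hflip⟩ := hC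
  obtain ⟨H₀, hdiff⟩ := Function.ne_iff.mp hne
  obtain ⟨hCH₀, hAH₀⟩ := (hflip H₀).1 hdiff
  have hiH₀ : i ∈ H₀.1 := hCH₀ ▸ hCor H₀
  have hH₀ : Anchored j μ H₀.1 := by
    by_contra hH
    have := (h.isLeast_apply hH).2 hiH₀
    omega
  obtain rfl : j = j' := (h.apply_of_anchored hH₀).symm.trans hAH₀
  have hμi : μ ≤ i := hH₀.2.2 hiH₀
  have hCeq : C = retarget Aj j μ i := by
    funext H
    by_cases hH : Anchored j μ H.1
    · rw [retarget_of_anchored hH]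
      exact ((hflip H).2 (h.mem_of_anchored H.2 hH ⟨hμi, hij.le⟩) hH.1).2 (h.apply_of_anchored hH)
    · rw [retarget_of_not_anchored hH]
      by_contra hne'
      obtain ⟨hCH, hAH⟩ := (hflip H).1 hne'
      have := (h.isLeast_apply hH).2 (hCH ▸ hCor H)
      omega
  refine ⟨i, ⟨⟨hμi, hij.le, fun K hK𝕀 hK hiK y hyK => ?_⟩, hij⟩, hCeq⟩
  -- otherwise `H₀` and `K` would form a 2-cycle of `C`
  by_contra! hyi
  have hKa : ¬Anchored j μ K := fun hK' => lt_irrefl _ (hK _ hK'.1).2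
  have hCK : C ⟨K, hK𝕀⟩ = Aj ⟨K, hK𝕀⟩ := by rw [hCeq, retarget_of_not_anchored hKa]
  have hm := h.isLeast_apply (H := ⟨K, hK𝕀⟩) hKa
  have hmy : Aj ⟨K, hK𝕀⟩ ≤ y := hm.2 hyK
  refine hCac.not_two_cycle (H₁ := H₀) (H₂ := ⟨K, hK𝕀⟩) ?_ ?_ ?_
  · rw [hCK]
    exact h.mem_of_anchored H₀.2 hH₀ ⟨(hK _ hm.1).1, (hK _ hm.1).2.le⟩
  · rw [hCH₀]
    exact hiK
  · rw [hCH₀, hCK]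
    omega

theorem coversP_retarget (h : IsAjSetting n 𝕀 j μ Aj) (hi : IsGreatest (freeBelow 𝕀 μ j) i) :
    CoversP n 𝕀 (retarget Aj j μ i) Aj := by
  refine ⟨(h.flipStep_retarget_Aj hi.1).ltP, ?_⟩
  rintro ⟨C, -, hBC, hCA⟩
  obtain ⟨D, hCD, hDA⟩ := hCA.exists_flipStep
  obtain ⟨i', hi', rfl⟩ := h.exists_eq_retarget_of_flipStep hDA
  have := hBC.weight_lt
  have := hCD.weight_le
  have := weight_retarget_le (Aj := Aj) (j := j) (μ := μ) (hi.2 hi')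
  omega

theorem eq_retarget_of_coversP (h : IsAjSetting n 𝕀 j μ Aj)
    (hi : IsGreatest (freeBelow 𝕀 μ j) i) {B : Edge 𝕀 → ℕ} (hB : CoversP n 𝕀 B Aj) :
    B = retarget Aj j μ i := by
  obtain ⟨hBA, hcov⟩ := hB
  obtain ⟨D, hBD, hDA⟩ := hBA.exists_flipStep
  obtain ⟨i', hi', rfl⟩ := h.exists_eq_retarget_of_flipStep hDA
  obtain rfl : B = retarget Aj j μ i' := by
    by_contra hne
    exact hcov ⟨_, hDA.1, ⟨hBD, hne⟩, hDA.ltP⟩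
  rcases (hi.2 hi').lt_or_eq with hlt | rfl
  · exact (hcov ⟨_, h.acycOr_retarget hi.1.1, (h.flipStep_retarget hi'.1 hi.1.1 hlt).ltP,
      (h.flipStep_retarget_Aj hi.1).ltP⟩).elim
  · rfl

end IsAjSetting

theorem stmt15_general (n : ℕ) (𝕀 : Finset (Finset ℕ))
    (h𝕀 : IsIntervalHypergraph n 𝕀) (hcl : ClosedUnderIntersection 𝕀)
    (j : ℕ) (hjJ : InJI 𝕀 j)
    (Jj : Finset ℕ) (hJj : IsJj 𝕀 j Jj)
    (μj : ℕ) (hμj : IsLeast (Jj : Set ℕ) μj)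
    (Aj : Edge 𝕀 → ℕ) (hAj : IsAj 𝕀 j μj Aj) :
    AcycOr 𝕀 Aj ∧
    (¬∀ B, AcycOr 𝕀 B → leP n 𝕀 Aj B) ∧
    (∃! B, AcycOr 𝕀 B ∧ CoversP n 𝕀 B Aj) := by
  have h := isAjSetting_of_isJj h𝕀 hcl hjJ hJj hμj hAj
  obtain ⟨i, hi⟩ := exists_isGreatest_freeBelow (𝕀 := 𝕀) h.lt
  exact ⟨h.acycOr, h.not_forall_leP,
    ⟨retarget Aj j μj i, ⟨h.acycOr_retarget hi.1.1, h.coversP_retarget hi⟩,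
      fun B hB => h.eq_retarget_of_coversP hi hB.2⟩⟩

/-- For an interval hypergraph `𝕀` closed under intersection and
`j ∈ 𝒥_𝕀`, the acyclic orientation `A_j` is join irreducible in `P_𝕀`: it is not the
minimal element and it covers exactly one element. -/
theorem stmt15 (n : ℕ) (hn : 1 ≤ n) (𝕀 : Finset (Finset ℕ))
    (h𝕀 : IsIntervalHypergraph n 𝕀) (hcl : ClosedUnderIntersection 𝕀)
    (j : ℕ) (hjJ : InJI 𝕀 j)
    (Jj : Finset ℕ) (hJj : IsJj 𝕀 j Jj)
    (μj : ℕ) (hμj : IsLeast (Jj : Set ℕ) μj)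
    (Aj : Edge 𝕀 → ℕ) (hAj : IsAj 𝕀 j μj Aj) :
    AcycOr 𝕀 Aj ∧
    (¬∀ B, AcycOr 𝕀 B → leP n 𝕀 Aj B) ∧
    (∃! B, AcycOr 𝕀 B ∧ CoversP n 𝕀 B Aj) :=
  stmt15_general n 𝕀 h𝕀 hcl j hjJ Jj hJj μj hμj Aj hAj
end IHL
end

section
/- Let 𝕀 be an interval hypergraph on [n] that is closed under intersection but not distributive (i.e., there exist I, J ∈ 𝕀 with I ⊈ J, J ⊈ I and I ∩ J ≠ ∅ such that I ∩ J ∉ 𝕀, or I ∩ J is neither initial nor final in some K ∈ 𝕀 with I ∩ J ⊆ K). Then there exists a join irreducible acyclic orientation A of 𝕀 (an element of P_𝕀 that is not minimal and covers exactly one element) such that A ≰ A_j in P_𝕀 for all j ∈ 𝒥_𝕀. -/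
namespace IHL

/-!
The join irreducible is the orientation `A_{t,m}` that sends each hyperedge `H ∋ t` with
`min H ≥ m` to `t` and every other hyperedge to its minimum, for a configuration where
hyperedges `K, F ∋ t` have minima `m < v`, no hyperedge through `t` has its minimum in `(m, v)`,
and every `i ∈ [v, t)` is blocked: `i ∈ H \ {min H}` for some hyperedge `H ⊆ [m, t)`. An
increasing flip into `A_{t,m}` moves `t` down to an unblocked `i ∈ [m, t)`, as a blocking `H`
would form a 2-cycle with `K`. All such `i` lie in `[m, v)`, where a hyperedge through `t` with
minimum `≥ m` contains `i` iff its minimum is `m`; so these flips form a chain and `A_{t,m}` has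
a unique lower cover. Comparing values on `K` and `F` shows `A_{t,m} ≰ A_j`.

Non-distributivity produces such a configuration. Two crossing hyperedges whose intersection
lies strictly inside a third give a hyperedge `B` with `min B < min F ≤ max B < t`. Let `K` be
the hyperedge through `t` with the largest minimum `m < min F`; if some `i ∈ [min F, t)` is
unblocked, then `B ∩ K` lies to the left of `i`, which gives the same situation with `t`
replaced by `i`, so this descent terminates.
-/

lemma Icc_inter_Icc {α : Type*} [LinearOrder α] [LocallyFiniteOrder α] (a b c d : α) :
    Finset.Icc a b ∩ Finset.Icc c d = Finset.Icc (max a c) (min b d) :=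
  Finset.coe_injective (by push_cast; exact Set.Icc_inter_Icc)

lemma sInf_coe_Icc {α : Type*} [ConditionallyCompleteLinearOrder α] [LocallyFiniteOrder α]
    {a b : α} (h : a ≤ b) : sInf ((Finset.Icc a b : Finset α) : Set α) = a := by
  rw [Finset.coe_Icc, csInf_Icc h]

lemma min_Icc {α : Type*} [LinearOrder α] [LocallyFiniteOrder α] {a b : α} (h : a ≤ b) :
    (Finset.Icc a b).min = a :=
  le_antisymm (Finset.min_le (Finset.left_mem_Icc.2 h))
    (Finset.le_min fun _ hx => WithTop.coe_le_coe.2 (Finset.mem_Icc.1 hx).1)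

lemma max_Icc {α : Type*} [LinearOrder α] [LocallyFiniteOrder α] {a b : α} (h : a ≤ b) :
    (Finset.Icc a b).max = b :=
  le_antisymm (Finset.max_le fun _ hx => WithBot.coe_le_coe.2 (Finset.mem_Icc.1 hx).2)
    (Finset.le_max (Finset.right_mem_Icc.2 h))

section Poset

variable {n : ℕ} {𝕀 : Finset (Finset ℕ)}

lemma isAcyclic_of_rank {O : Edge 𝕀 → ℕ} (φ : ℕ → ℕ)
    (hφ : ∀ H : Edge 𝕀, ∀ x ∈ H.1, x ≠ O H → φ (O H) < φ x) : IsAcyclic 𝕀 O := by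
  rintro ⟨k, H, hk, hHk, hcyc⟩
  have hrank : ∀ p ≤ k, φ (O (H 0)) + p ≤ φ (O (H p)) := by
    intro p hp
    induction p with
    | zero => simp
    | succ q ih =>
      have := hφ (H q) _ (hcyc q hp).1 (hcyc q hp).2
      have := ih (by omega)
      omega
  have := hrank k le_rfl
  rw [hHk] at this
  omega

lemma not_isAcyclic_of_two_cycle {O : Edge 𝕀 → ℕ} (H₀ H₁ : Edge 𝕀)
    (h₁ : O H₁ ∈ H₀.1) (h₀ : O H₀ ∈ H₁.1) (hne : O H₀ ≠ O H₁) : ¬IsAcyclic 𝕀 O := fun hO =>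
  hO ⟨2, fun p => if p = 1 then H₁ else H₀, le_rfl, rfl, fun p hp => by
    interval_cases p <;> simp_all [eq_comm]⟩

lemma FlipStep.ne {O O' : Edge 𝕀 → ℕ} (h : FlipStep n 𝕀 O O') : O ≠ O' :=
  have ⟨_, _, _, _, hne, _⟩ := h
  hne

lemma leP.apply_le {O O' : Edge 𝕀 → ℕ} (h : leP n 𝕀 O O') (H : Edge 𝕀) : O H ≤ O' H := by
  induction h with
  | refl => rfl
  | @tail B C _ hstep ih =>
    obtain ⟨-, -, i, j, -, -, hij, -, hflip⟩ := hstep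
    by_cases hH : B H = C H
    · exact ih.trans hH.le
    · have := (hflip H).1 hH
      omega

lemma leP.antisymm {O O' : Edge 𝕀 → ℕ} (h : leP n 𝕀 O O') (h' : leP n 𝕀 O' O) : O = O' :=
  funext fun H => le_antisymm (h.apply_le H) (h'.apply_le H)

lemma ltP.exists_flipStep_s17 {C A : Edge 𝕀 → ℕ} (h : ltP n 𝕀 C A) :
    ∃ C', leP n 𝕀 C C' ∧ FlipStep n 𝕀 C' A := by
  rcases Relation.ReflTransGen.cases_tail h.1 with hAC | hC'
  · exact absurd hAC.symm h.2
  · exact hC'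

lemma existsUnique_coversP {A B : Edge 𝕀 → ℕ} (hB : AcycOr 𝕀 B) (hBA : ltP n 𝕀 B A)
    (hmax : ∀ C, ltP n 𝕀 C A → leP n 𝕀 C B) : ∃! B, AcycOr 𝕀 B ∧ CoversP n 𝕀 B A := by
  refine ⟨B, ⟨hB, hBA, ?_⟩, ?_⟩
  · rintro ⟨C, -, hBC, hCA⟩
    exact hBC.2 (hBC.1.antisymm (hmax C hCA))
  · rintro B' ⟨-, hB'A, hB'⟩
    by_contra hne
    exact hB' ⟨B, hB, ⟨hmax B' hB'A, hne⟩, hBA⟩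

end Poset

/-- For `i < t`, this says `i ∈ H \ {min H}` for some hyperedge `H ⊆ [m, t)`, as in the
definition of `ℐ𝒥_𝕀`. -/
def IsBlocked (𝕀 : Finset (Finset ℕ)) (t m i : ℕ) : Prop :=
  ∃ H ∈ 𝕀, i ∈ H ∧ t ∉ H ∧ m ≤ sInf (H : Set ℕ) ∧ sInf (H : Set ℕ) < i

/-- The orientation `A_{ij}` of the paper, with `j = t` and `μ_{ij} = m`. -/
noncomputable def orientTo (𝕀 : Finset (Finset ℕ)) (t m : ℕ) : Edge 𝕀 → ℕ :=
  fun H => if t ∈ H.1 ∧ m ≤ sInf (H.1 : Set ℕ) then t else sInf (H.1 : Set ℕ)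

noncomputable def flipDown (𝕀 : Finset (Finset ℕ)) (t m i : ℕ) : Edge 𝕀 → ℕ :=
  fun H => if i ∈ H.1 ∧ t ∈ H.1 ∧ m ≤ sInf (H.1 : Set ℕ) then i else orientTo 𝕀 t m H

/-- The `i` of the pair `(i, t) ∈ ℐ𝒥_𝕀` when `μ_{ij} = m`. -/
noncomputable def maxUnblocked (𝕀 : Finset (Finset ℕ)) (t m : ℕ) : ℕ :=
  open Classical in Nat.findGreatest (fun i => m ≤ i ∧ ¬IsBlocked 𝕀 t m i) (t - 1)

structure IsGap (𝕀 : Finset (Finset ℕ)) (t m v : ℕ) (K F : Finset ℕ) : Prop where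
  K_mem : K ∈ 𝕀
  F_mem : F ∈ 𝕀
  t_mem_K : t ∈ K
  t_mem_F : t ∈ F
  sInf_K : sInf (K : Set ℕ) = m
  sInf_F : sInf (F : Set ℕ) = v
  m_lt_v : m < v
  v_lt_t : v < t
  le_sInf : ∀ H ∈ 𝕀, t ∈ H → m < sInf (H : Set ℕ) → v ≤ sInf (H : Set ℕ)
  isBlocked : ∀ i, v ≤ i → i < t → IsBlocked 𝕀 t m i

section Orientations

variable {n : ℕ} {𝕀 : Finset (Finset ℕ)} {t m i : ℕ} {K : Finset ℕ}

lemma acycOr_orientTo (h𝕀 : IsIntervalHypergraph n 𝕀) (hmt : m < t) :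
    AcycOr 𝕀 (orientTo 𝕀 t m) := by
  refine ⟨?_, isAcyclic_of_rank (fun x => if x = t then 2 * m + 1 else 2 * x + 2) ?_⟩
  all_goals
    rintro ⟨H, hH⟩
    obtain ⟨a, b, -, hab, -, rfl⟩ := h𝕀.1 H hH
    simp only [orientTo, Finset.mem_Icc, sInf_coe_Icc hab]
  · split_ifs <;> omega
  · intro x hx hne
    split_ifs at hne ⊢ <;> omega

lemma acycOr_flipDown (h𝕀 : IsIntervalHypergraph n 𝕀) (hmi : m ≤ i) (hit : i < t)
    (hi : ¬IsBlocked 𝕀 t m i) : AcycOr 𝕀 (flipDown 𝕀 t m i) := by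
  refine ⟨?_, isAcyclic_of_rank
    (fun x => if x = t then 2 * i + 3 else if x = i then 2 * m + 1 else 2 * x + 2) ?_⟩
  all_goals
    rintro ⟨H, hH⟩
    have hHi := fun h => hi ⟨H, hH, h⟩
    obtain ⟨a, b, -, hab, -, rfl⟩ := h𝕀.1 H hH
    simp only [flipDown, orientTo, Finset.mem_Icc, sInf_coe_Icc hab, imp_false] at hHi ⊢
  · split_ifs <;> omega
  · intro x hx hne
    split_ifs at hne ⊢ <;> omega

lemma flipStep_flipDown_orientTo (h𝕀 : IsIntervalHypergraph n 𝕀) (hK : K ∈ 𝕀) (htK : t ∈ K)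
    (hKm : sInf (K : Set ℕ) = m) (hmi : m ≤ i) (hit : i < t) (hi : ¬IsBlocked 𝕀 t m i) :
    FlipStep n 𝕀 (flipDown 𝕀 t m i) (orientTo 𝕀 t m) := by
  obtain ⟨c, d, hc, hcd, hd, rfl⟩ := h𝕀.1 K hK
  rw [sInf_coe_Icc hcd] at hKm
  rw [Finset.mem_Icc] at htK
  refine ⟨acycOr_flipDown h𝕀 hmi hit hi, acycOr_orientTo h𝕀 (by omega), i, t, fun h => ?_,
    by omega, hit, by omega, ?_⟩
  · have := congrFun h ⟨_, hK⟩
    simp only [flipDown, orientTo, Finset.mem_Icc, sInf_coe_Icc hcd] at this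
    split_ifs at this <;> omega
  · rintro ⟨H, hH⟩
    obtain ⟨a, b, -, hab, -, rfl⟩ := h𝕀.1 H hH
    simp only [flipDown, orientTo, Finset.mem_Icc, sInf_coe_Icc hab]
    split_ifs <;> omega

end Orientations

section Flips

variable {n : ℕ} {𝕀 : Finset (Finset ℕ)} {t m i j : ℕ} {K : Finset ℕ} {C : Edge 𝕀 → ℕ}

lemma IsIncFlip.eq_flipDown (h𝕀 : IsIntervalHypergraph n 𝕀) (hC : IsOrientation 𝕀 C)
    (hf : IsIncFlip n 𝕀 i j C (orientTo 𝕀 t m)) :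
    j = t ∧ m ≤ i ∧ C = flipDown 𝕀 t m i := by
  obtain ⟨hne, -, hij, -, hf⟩ := hf
  obtain ⟨⟨H₀, hH₀⟩, hdiff⟩ : ∃ H, C H ≠ orientTo 𝕀 t m H := by
    by_contra! h
    exact hne (funext h)
  have hflip₀ := (hf _).1 hdiff
  have hC₀ := hC ⟨H₀, hH₀⟩
  obtain ⟨a, b, -, hab, -, rfl⟩ := h𝕀.1 H₀ hH₀
  simp only [orientTo, Finset.mem_Icc, sInf_coe_Icc hab] at hflip₀ hC₀
  obtain ⟨rfl, hmi⟩ : j = t ∧ m ≤ i := by split_ifs at hflip₀ <;> omega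
  refine ⟨rfl, hmi, funext fun ⟨H, hH⟩ => ?_⟩
  have hflip := hf ⟨H, hH⟩
  have hCH := hC ⟨H, hH⟩
  obtain ⟨a, b, -, hab, -, rfl⟩ := h𝕀.1 H hH
  simp only [flipDown, orientTo, Finset.mem_Icc, sInf_coe_Icc hab] at hflip hCH ⊢
  split_ifs at hflip ⊢ <;> omega

/-- A blocking hyperedge `H` for `i` and the hyperedge `K` would form a 2-cycle after the flip. -/
lemma not_isBlocked_of_isIncFlip (h𝕀 : IsIntervalHypergraph n 𝕀) (hK : K ∈ 𝕀) (htK : t ∈ K)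
    (hKm : sInf (K : Set ℕ) = m) (hC : AcycOr 𝕀 C) (hmi : m ≤ i)
    (hf : IsIncFlip n 𝕀 i t C (orientTo 𝕀 t m)) : ¬IsBlocked 𝕀 t m i := by
  rintro ⟨H, hH, hiH, htH, hmH, hHi⟩
  obtain ⟨-, -, hit, -, hf⟩ := hf
  have hfK := hf ⟨K, hK⟩
  have hfH := hf ⟨H, hH⟩
  obtain ⟨c, d, -, hcd, -, rfl⟩ := h𝕀.1 K hK
  obtain ⟨a, b, -, hab, -, rfl⟩ := h𝕀.1 H hH
  simp only [Finset.mem_Icc, sInf_coe_Icc hab] at hiH htH hmH hHi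
  simp only [orientTo, Finset.mem_Icc, sInf_coe_Icc hcd, sInf_coe_Icc hab] at htK hKm hfK hfH
  have hCK : C ⟨_, hK⟩ = i := by split_ifs at hfK <;> omega
  have hCH' : C ⟨_, hH⟩ = a := by split_ifs at hfH <;> omega
  refine not_isAcyclic_of_two_cycle ⟨_, hH⟩ ⟨_, hK⟩ ?_ ?_ ?_ hC.2 <;>
    simp only [hCK, hCH', Finset.mem_Icc] <;> omega

lemma exists_eq_flipDown_of_flipStep (h𝕀 : IsIntervalHypergraph n 𝕀) (hK : K ∈ 𝕀) (htK : t ∈ K)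
    (hKm : sInf (K : Set ℕ) = m) (hC : FlipStep n 𝕀 C (orientTo 𝕀 t m)) :
    ∃ i, m ≤ i ∧ i < t ∧ ¬IsBlocked 𝕀 t m i ∧ C = flipDown 𝕀 t m i := by
  obtain ⟨hCac, -, i, j, hf⟩ := hC
  obtain ⟨rfl, hmi, rfl⟩ := hf.eq_flipDown h𝕀 hCac.1
  exact ⟨i, hmi, hf.2.2.1, not_isBlocked_of_isIncFlip h𝕀 hK htK hKm hCac hmi hf, rfl⟩

end Flips

namespace IsGap

variable {n : ℕ} {𝕀 : Finset (Finset ℕ)} {t m v i j : ℕ} {K F : Finset ℕ}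

lemma flipStep_flipDown (hg : IsGap 𝕀 t m v K F) (h𝕀 : IsIntervalHypergraph n 𝕀) (hmi : m ≤ i)
    (hij : i < j) (hjv : j < v) (hi : ¬IsBlocked 𝕀 t m i) (hj : ¬IsBlocked 𝕀 t m j) :
    FlipStep n 𝕀 (flipDown 𝕀 t m i) (flipDown 𝕀 t m j) := by
  have hvt := hg.v_lt_t
  have hK := hg.K_mem
  have htK := hg.t_mem_K
  have hKm := hg.sInf_K
  obtain ⟨c, d, hc, hcd, hd, rfl⟩ := h𝕀.1 K hK
  simp only [Finset.mem_Icc, sInf_coe_Icc hcd] at htK hKm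
  refine ⟨acycOr_flipDown h𝕀 hmi (by omega) hi, acycOr_flipDown h𝕀 (by omega) (by omega) hj,
    i, j, fun h => ?_, by omega, hij, by omega, ?_⟩
  · have := congrFun h ⟨_, hK⟩
    simp only [flipDown, orientTo, Finset.mem_Icc, sInf_coe_Icc hcd] at this
    split_ifs at this <;> omega
  · rintro ⟨H, hH⟩
    have hgap := hg.le_sInf H hH
    have hHj := fun h => hj ⟨H, hH, h⟩
    obtain ⟨a, b, -, hab, -, rfl⟩ := h𝕀.1 H hH
    simp only [flipDown, orientTo, Finset.mem_Icc, sInf_coe_Icc hab, imp_false] at hgap hHj ⊢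
    split_ifs <;> omega

lemma maxUnblocked_spec (hg : IsGap 𝕀 t m v K F) :
    m ≤ maxUnblocked 𝕀 t m ∧ maxUnblocked 𝕀 t m < v ∧ ¬IsBlocked 𝕀 t m (maxUnblocked 𝕀 t m) := by
  classical
  have hmt := hg.m_lt_v.trans hg.v_lt_t
  have hm : m ≤ m ∧ ¬IsBlocked 𝕀 t m m := ⟨le_rfl, fun ⟨_, _, _, _, h, h'⟩ => by omega⟩
  obtain ⟨hm_le, hblock⟩ := Nat.findGreatest_spec (P := fun i => m ≤ i ∧ ¬IsBlocked 𝕀 t m i)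
    (by omega : m ≤ t - 1) hm
  have hlt : maxUnblocked 𝕀 t m < t := by
    have := Nat.findGreatest_le (P := fun i => m ≤ i ∧ ¬IsBlocked 𝕀 t m i) (t - 1)
    unfold maxUnblocked
    omega
  exact ⟨hm_le, not_le.1 fun hv => hblock (hg.isBlocked _ hv hlt), hblock⟩

lemma le_maxUnblocked (hmi : m ≤ i) (hit : i < t) (hi : ¬IsBlocked 𝕀 t m i) :
    i ≤ maxUnblocked 𝕀 t m := by
  classical
  exact Nat.le_findGreatest (by omega) ⟨hmi, hi⟩

lemma leP_flipDown_maxUnblocked (hg : IsGap 𝕀 t m v K F) (h𝕀 : IsIntervalHypergraph n 𝕀)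
    (hmi : m ≤ i) (hit : i < t) (hi : ¬IsBlocked 𝕀 t m i) :
    leP n 𝕀 (flipDown 𝕀 t m i) (flipDown 𝕀 t m (maxUnblocked 𝕀 t m)) := by
  obtain ⟨-, hv, hmax⟩ := hg.maxUnblocked_spec
  rcases (le_maxUnblocked hmi hit hi).lt_or_eq with hlt | rfl
  · exact .single (hg.flipStep_flipDown h𝕀 hmi hlt hv hi hmax)
  · exact .refl

lemma acycOr_flipDown_maxUnblocked (hg : IsGap 𝕀 t m v K F) (h𝕀 : IsIntervalHypergraph n 𝕀) :
    AcycOr 𝕀 (flipDown 𝕀 t m (maxUnblocked 𝕀 t m)) :=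
  have ⟨hm, hv, hmax⟩ := hg.maxUnblocked_spec
  acycOr_flipDown h𝕀 hm (hv.trans hg.v_lt_t) hmax

lemma ltP_orientTo (hg : IsGap 𝕀 t m v K F) (h𝕀 : IsIntervalHypergraph n 𝕀) :
    ltP n 𝕀 (flipDown 𝕀 t m (maxUnblocked 𝕀 t m)) (orientTo 𝕀 t m) := by
  obtain ⟨hm, hv, hmax⟩ := hg.maxUnblocked_spec
  have hstep := flipStep_flipDown_orientTo h𝕀 hg.K_mem hg.t_mem_K hg.sInf_K hm
    (hv.trans hg.v_lt_t) hmax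
  exact ⟨.single hstep, hstep.ne⟩

lemma leP_of_ltP (hg : IsGap 𝕀 t m v K F) (h𝕀 : IsIntervalHypergraph n 𝕀) {C : Edge 𝕀 → ℕ}
    (hC : ltP n 𝕀 C (orientTo 𝕀 t m)) :
    leP n 𝕀 C (flipDown 𝕀 t m (maxUnblocked 𝕀 t m)) := by
  obtain ⟨C', hCC', hC'⟩ := hC.exists_flipStep_s17
  obtain ⟨i, hmi, hit, hi, rfl⟩ :=
    exists_eq_flipDown_of_flipStep h𝕀 hg.K_mem hg.t_mem_K hg.sInf_K hC'
  exact hCC'.trans (hg.leP_flipDown_maxUnblocked h𝕀 hmi hit hi)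

lemma existsUnique_coversP (hg : IsGap 𝕀 t m v K F) (h𝕀 : IsIntervalHypergraph n 𝕀) :
    ∃! B, AcycOr 𝕀 B ∧ CoversP n 𝕀 B (orientTo 𝕀 t m) :=
  IHL.existsUnique_coversP (hg.acycOr_flipDown_maxUnblocked h𝕀) (hg.ltP_orientTo h𝕀)
    fun _ => hg.leP_of_ltP h𝕀

lemma not_isMin (hg : IsGap 𝕀 t m v K F) (h𝕀 : IsIntervalHypergraph n 𝕀) :
    ¬∀ B, AcycOr 𝕀 B → leP n 𝕀 (orientTo 𝕀 t m) B := fun hmin =>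
  have hlt := hg.ltP_orientTo h𝕀
  hlt.2 (hlt.1.antisymm (hmin _ (hg.acycOr_flipDown_maxUnblocked h𝕀)))

/-- `A_j` sends `K` to `min K = m` unless `μ_j = m`, and then it sends `F` to `min F = v`. -/
lemma not_leP_of_isAj (hg : IsGap 𝕀 t m v K F) {μj : ℕ} {Aj : Edge 𝕀 → ℕ}
    (hAj : IsAj 𝕀 j μj Aj) : ¬leP n 𝕀 (orientTo 𝕀 t m) Aj := by
  intro hle
  have hAK : orientTo 𝕀 t m ⟨K, hg.K_mem⟩ = t := if_pos ⟨hg.t_mem_K, hg.sInf_K.ge⟩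
  have hAF : orientTo 𝕀 t m ⟨F, hg.F_mem⟩ = t := if_pos ⟨hg.t_mem_F, hg.sInf_F ▸ hg.m_lt_v.le⟩
  by_cases hjK : j ∈ K ∧ IsLeast (K : Set ℕ) μj
  · have hμ : μj = m := hjK.2.csInf_eq.symm.trans hg.sInf_K
    have hjF : ¬(j ∈ F ∧ IsLeast (F : Set ℕ) μj) := fun h => by
      have := h.2.csInf_eq.symm.trans hg.sInf_F
      exact hg.m_lt_v.ne (hμ.symm.trans this)
    have := hle.apply_le ⟨F, hg.F_mem⟩
    rw [hAF, ← ((hAj _).2 hjF).csInf_eq, hg.sInf_F] at this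
    exact absurd this (not_le.2 hg.v_lt_t)
  · have := hle.apply_le ⟨K, hg.K_mem⟩
    rw [hAK, ← ((hAj _).2 hjK).csInf_eq, hg.sInf_K] at this
    exact absurd this (not_le.2 (hg.m_lt_v.trans hg.v_lt_t))

end IsGap

lemma exists_maximal_sInf_lt {𝕀 : Finset (Finset ℕ)} {t v : ℕ} {K : Finset ℕ} (hK : K ∈ 𝕀)
    (htK : t ∈ K) (hKv : sInf (K : Set ℕ) < v) :
    ∃ K' ∈ 𝕀, t ∈ K' ∧ sInf (K' : Set ℕ) < v ∧
      ∀ H ∈ 𝕀, t ∈ H → sInf (K' : Set ℕ) < sInf (H : Set ℕ) → v ≤ sInf (H : Set ℕ) := by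
  classical
  obtain ⟨K', hK', hmax⟩ := Finset.exists_max_image
    (𝕀.filter fun E : Finset ℕ => t ∈ E ∧ sInf (E : Set ℕ) < v) (fun E => sInf (E : Set ℕ))
    ⟨K, Finset.mem_filter.2 ⟨hK, htK, hKv⟩⟩
  obtain ⟨hK'𝕀, htK', hK'v⟩ := Finset.mem_filter.1 hK'
  exact ⟨K', hK'𝕀, htK', hK'v, fun H hH htH hlt =>
    not_lt.1 fun h => (hmax H (Finset.mem_filter.2 ⟨hH, htH, h⟩)).not_gt hlt⟩

structure IsBridge (𝕀 : Finset (Finset ℕ)) (t : ℕ) (K F B : Finset ℕ) : Prop where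
  K_mem : K ∈ 𝕀
  F_mem : F ∈ 𝕀
  B_mem : B ∈ 𝕀
  t_mem_K : t ∈ K
  t_mem_F : t ∈ F
  sInf_K_lt : sInf (K : Set ℕ) < sInf (F : Set ℕ)
  sInf_B_lt : sInf (B : Set ℕ) < sInf (F : Set ℕ)
  sInf_F_mem : sInf (F : Set ℕ) ∈ B
  t_not_mem : t ∉ B

namespace IsBridge

variable {n : ℕ} {𝕀 : Finset (Finset ℕ)} {t i : ℕ} {K K' F B : Finset ℕ}

lemma inter (hb : IsBridge 𝕀 t K F B) (h𝕀 : IsIntervalHypergraph n 𝕀)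
    (hcl : ClosedUnderIntersection 𝕀) (hK' : K' ∈ 𝕀) (htK' : t ∈ K')
    (hK'F : sInf (K' : Set ℕ) < sInf (F : Set ℕ)) (hFi : sInf (F : Set ℕ) ≤ i) (hit : i < t)
    (hi : ¬IsBlocked 𝕀 t (sInf (K' : Set ℕ)) i) : IsBridge 𝕀 i K' F (B ∩ K') := by
  have hFB := hb.sInf_F_mem
  have hBF := hb.sInf_B_lt
  have htB := hb.t_not_mem
  have htF := hb.t_mem_F
  obtain ⟨a, b, -, hab, -, rfl⟩ := h𝕀.1 B hb.B_mem
  obtain ⟨c, d, -, hcd, -, rfl⟩ := h𝕀.1 K' hK'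
  obtain ⟨p, q, -, hpq, -, rfl⟩ := h𝕀.1 F hb.F_mem
  simp only [Finset.mem_Icc, sInf_coe_Icc hab, sInf_coe_Icc hpq] at hFB hBF htB htF hFi
  simp only [Finset.mem_Icc, sInf_coe_Icc hcd, sInf_coe_Icc hpq] at htK' hK'F hi
  have hBK' : Finset.Icc (max a c) (min b d) ∈ 𝕀 := Icc_inter_Icc a b c d ▸
    hcl _ hb.B_mem _ hK' (by rw [Icc_inter_Icc, Finset.nonempty_Icc]; omega)
  have hi' := fun h => hi ⟨_, hBK', h⟩
  have hB' : max a c ≤ min b d := by omega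
  simp only [Finset.mem_Icc, sInf_coe_Icc hB', imp_false] at hi'
  rw [Icc_inter_Icc]
  refine ⟨hK', hb.F_mem, hBK', ?_, ?_, ?_, ?_, ?_, ?_⟩ <;>
    simp only [Finset.mem_Icc, sInf_coe_Icc hcd, sInf_coe_Icc hpq, sInf_coe_Icc hB'] <;> omega

lemma isGap_or_isBridge (hb : IsBridge 𝕀 t K F B) (h𝕀 : IsIntervalHypergraph n 𝕀)
    (hcl : ClosedUnderIntersection 𝕀) :
    (∃ m K', IsGap 𝕀 t m (sInf (F : Set ℕ)) K' F) ∨ ∃ i < t, ∃ K' B', IsBridge 𝕀 i K' F B' := by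
  obtain ⟨K', hK', htK', hK'F, hgap⟩ :=
    exists_maximal_sInf_lt hb.K_mem hb.t_mem_K hb.sInf_K_lt
  by_cases hall : ∀ i, sInf (F : Set ℕ) ≤ i → i < t → IsBlocked 𝕀 t (sInf (K' : Set ℕ)) i
  · have hFt : sInf (F : Set ℕ) < t :=
      (Nat.sInf_le hb.t_mem_F).lt_of_ne fun h => hb.t_not_mem (h ▸ hb.sInf_F_mem)
    exact .inl ⟨_, K', ⟨hK', hb.F_mem, htK', hb.t_mem_F, rfl, rfl, hK'F, hFt, hgap, hall⟩⟩
  · push Not at hall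
    obtain ⟨i, hFi, hit, hi⟩ := hall
    exact .inr ⟨i, hit, K', _, hb.inter h𝕀 hcl hK' htK' hK'F hFi hit hi⟩

lemma exists_isGap (hb : IsBridge 𝕀 t K F B) (h𝕀 : IsIntervalHypergraph n 𝕀)
    (hcl : ClosedUnderIntersection 𝕀) : ∃ t m v K F, IsGap 𝕀 t m v K F := by
  induction t using Nat.strong_induction_on generalizing K B with
  | _ t ih =>
    rcases hb.isGap_or_isBridge h𝕀 hcl with ⟨m, K', hg⟩ | ⟨i, hit, K', B', hb'⟩
    · exact ⟨t, m, _, K', F, hg⟩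
    · exact ih i hit hb'

end IsBridge

section Construction

variable {n : ℕ} {𝕀 : Finset (Finset ℕ)}

lemma exists_isBridge_of_crossing (hcl : ClosedUnderIntersection 𝕀) {a b c d e f : ℕ}
    (hI : Finset.Icc a b ∈ 𝕀) (hJ : Finset.Icc c d ∈ 𝕀) (hK : Finset.Icc e f ∈ 𝕀)
    (hac : a < c) (hcb : c ≤ b) (hbd : b < d) (hec : e < c) (hbf : b < f) :
    ∃ t K F B, IsBridge 𝕀 t K F B := by
  have hF := hcl _ hJ _ hK (by rw [Icc_inter_Icc, Finset.nonempty_Icc]; omega)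
  have hB := hcl _ hI _ hK (by rw [Icc_inter_Icc, Finset.nonempty_Icc]; omega)
  rw [Icc_inter_Icc] at hF hB
  have hef : e ≤ f := by omega
  have hF' : max c e ≤ min d f := by omega
  have hB' : max a e ≤ min b f := by omega
  refine ⟨min d f, _, _, _, ⟨hK, hF, hB, ?_, ?_, ?_, ?_, ?_, ?_⟩⟩ <;>
    simp only [Finset.mem_Icc, sInf_coe_Icc hef, sInf_coe_Icc hF', sInf_coe_Icc hB'] <;> omega

lemma exists_isBridge (h𝕀 : IsIntervalHypergraph n 𝕀) (hcl : ClosedUnderIntersection 𝕀)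
    (hnd : ¬IsDistribHG 𝕀) : ∃ t K F B, IsBridge 𝕀 t K F B := by
  unfold IsDistribHG at hnd
  push Not at hnd
  obtain ⟨I, hI, J, hJ, hIJ, hJI, hne, hbad⟩ := hnd
  obtain ⟨K, hK, hsub, hmin, hmax⟩ := hbad (hcl I hI J hJ hne)
  obtain ⟨a, b, -, hab, -, rfl⟩ := h𝕀.1 I hI
  obtain ⟨c, d, -, hcd, -, rfl⟩ := h𝕀.1 J hJ
  obtain ⟨e, f, -, hef, -, rfl⟩ := h𝕀.1 K hK
  rw [Icc_inter_Icc, Finset.nonempty_Icc] at hne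
  rw [Icc_inter_Icc] at hsub hmin hmax
  rw [Finset.Icc_subset_Icc_iff hab] at hIJ
  rw [Finset.Icc_subset_Icc_iff hcd] at hJI
  rw [Finset.Icc_subset_Icc_iff hne] at hsub
  rw [min_Icc hne, min_Icc hef, WithTop.coe_inj.ne] at hmin
  rw [max_Icc hne, max_Icc hef, WithBot.coe_inj.ne] at hmax
  rcases lt_or_gt_of_ne (show a ≠ c by omega) with hac | hca
  · exact exists_isBridge_of_crossing hcl hI hJ hK hac (by omega) (by omega) (by omega) (by omega)
  · exact exists_isBridge_of_crossing hcl hJ hI hK hca (by omega) (by omega) (by omega) (by omega)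

end Construction

theorem stmt17_general (n : ℕ) (𝕀 : Finset (Finset ℕ))
    (h𝕀 : IsIntervalHypergraph n 𝕀) (hcl : ClosedUnderIntersection 𝕀)
    (hnd : ¬IsDistribHG 𝕀)
    (Jf : ℕ → Finset ℕ) (μ : ℕ → ℕ) (Af : ℕ → Edge 𝕀 → ℕ)
    (hfam : ∀ j, InJI 𝕀 j →
      IsJj 𝕀 j (Jf j) ∧ IsLeast ((Jf j : Finset ℕ) : Set ℕ) (μ j) ∧ IsAj 𝕀 j (μ j) (Af j)) :
    ∃ A, AcycOr 𝕀 A ∧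
      (¬∀ B, AcycOr 𝕀 B → leP n 𝕀 A B) ∧
      (∃! B, AcycOr 𝕀 B ∧ CoversP n 𝕀 B A) ∧
      ∀ j, InJI 𝕀 j → ¬leP n 𝕀 A (Af j) := by
  obtain ⟨_, _, _, _, hb⟩ := exists_isBridge h𝕀 hcl hnd
  obtain ⟨t, m, v, K, F, hg⟩ := hb.exists_isGap h𝕀 hcl
  exact ⟨orientTo 𝕀 t m, acycOr_orientTo h𝕀 (hg.m_lt_v.trans hg.v_lt_t), hg.not_isMin h𝕀,
    hg.existsUnique_coversP h𝕀, fun j hj => hg.not_leP_of_isAj (hfam j hj).2.2⟩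

/-- If an interval hypergraph `𝕀` is closed under intersection but
not distributive, then there is a join irreducible acyclic orientation `A` of `𝕀`
with `A ≰ A_j` for all `j ∈ 𝒥_𝕀`. -/
theorem stmt17 (n : ℕ) (hn : 1 ≤ n) (𝕀 : Finset (Finset ℕ))
    (h𝕀 : IsIntervalHypergraph n 𝕀) (hcl : ClosedUnderIntersection 𝕀)
    (hnd : ¬IsDistribHG 𝕀)
    (Jf : ℕ → Finset ℕ) (μ : ℕ → ℕ) (Af : ℕ → Edge 𝕀 → ℕ)
    (hfam : ∀ j, InJI 𝕀 j →
      IsJj 𝕀 j (Jf j) ∧ IsLeast ((Jf j : Finset ℕ) : Set ℕ) (μ j) ∧ IsAj 𝕀 j (μ j) (Af j)) :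
    ∃ A, AcycOr 𝕀 A ∧
      (¬∀ B, AcycOr 𝕀 B → leP n 𝕀 A B) ∧
      (∃! B, AcycOr 𝕀 B ∧ CoversP n 𝕀 B A) ∧
      ∀ j, InJI 𝕀 j → ¬leP n 𝕀 A (Af j) :=
  stmt17_general n 𝕀 h𝕀 hcl hnd Jf μ Af hfam
end IHL
end
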